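/- arXiv:1503.04438 — 7 statements merged into one kernel-verified Lean document; each statement's English description precedes it below -/
import Mathlib

section
/- Let m be a finite Borel measure on X. Suppose that for every sufficiently small ε > 0 (in particular with U(ε) ⊆ O), one has lim_{n→∞} [P₁^n m](B) = 0 for every Borel set B ⊆ X \ U(ε) with m(B) > 0. Then the equilibrium x = 0 is almost everywhere almost surely stable with respect to m. -/
/-!
Fix `ε > 0` with `X ∩ U(ε) ⊆ O` and put `B = X \ U(ε)`. Integrated against `m`, the probability
of staying in `B` for `n` steps is at most `[P₁ⁿ m](B) → 0`, so from `m`-a.e. starting point the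
trajectory almost surely enters `X ∩ U(ε)`. Since the noise is i.i.d., the trajectory restarts at
each visit (Markov property), and local stability makes non-convergence after a visit a null event.
-/

open MeasureTheory Filter Metric Set

noncomputable section

/-- The restriction `P₁` of the Perron–Frobenius operator to a set `S` (= `X \ {0}`):
`[P₁ μ](B) = ∫_S ∫_W χ_B(T(x,y)) dv(y) dμ(x)`, with the output measure restricted to `S`
(so that the operator can be iterated). -/
def P1 {α Wsp : Type*} [MeasurableSpace α] [MeasurableSpace Wsp]
    (T : α → Wsp → α) (v : Measure Wsp) (S : Set α) (μ : Measure α) : Measure α :=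
  ((μ.restrict S).bind fun x => v.map (T x)).restrict S

/-- The random trajectory `x_{n+1} = T(x_n, y_n)` starting from `x`. -/
def traj {α Wsp : Type*} (T : α → Wsp → α) (x : α) (y : ℕ → Wsp) : ℕ → α
  | 0 => x
  | n + 1 => T (traj T x y n) (y n)

open scoped ENNReal Topology

section ProductMeasure

variable {W : Type*} [MeasurableSpace W] (v : Measure W) [IsProbabilityMeasure v]

theorem MeasureTheory.Measure.eq_infinitePi_of_fin_cylinders {P : Measure (ℕ → W)}
    (hP : ∀ (n : ℕ) (f : Fin n → Set W), (∀ i, MeasurableSet (f i)) →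
      P {y : ℕ → W | ∀ i : Fin n, y (i : ℕ) ∈ f i} = ∏ i, v (f i)) :
    P = Measure.infinitePi fun _ => v := by
  classical
  refine Measure.eq_infinitePi _ fun s t ht => ?_
  obtain ⟨n, hsn⟩ : ∃ n, s ⊆ Finset.range n := ⟨s.sup id + 1, fun i hi =>
    Finset.mem_range.2 (Nat.lt_succ_of_le (Finset.le_sup (f := id) hi))⟩
  set f : ℕ → Set W := fun i => if i ∈ s then t i else univ
  have hpi : (s : Set ℕ).pi t = {y : ℕ → W | ∀ i : Fin n, y i ∈ f i} := by
    ext y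
    simp only [Set.mem_pi, Finset.mem_coe, mem_ofPred_eq, f]
    refine ⟨fun h i => ?_, fun h i hi => by simpa [hi] using h ⟨i, Finset.mem_range.1 (hsn hi)⟩⟩
    split_ifs with hi
    · exact h i hi
    · trivial
  rw [hpi, hP n (fun i => f i) fun i => by simp only [f]; split_ifs <;> simp [ht],
    Fin.prod_univ_eq_prod_range (fun i => v (f i)) n]
  simp only [f, apply_ite v, measure_univ]
  rw [Finset.prod_ite_mem, Finset.inter_eq_right.2 hsn]

theorem MeasureTheory.Measure.infinitePi_map_head_tail :
    (Measure.infinitePi fun _ : ℕ => v).map (fun y => (y 0, fun n => y (n + 1))) =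
      v.prod (Measure.infinitePi fun _ => v) := by
  classical
  set P := Measure.infinitePi fun _ : ℕ => v
  have hspan : P.FiniteSpanningSetsIn (squareCylinders fun _ => {s : Set W | MeasurableSet s}) :=
    ⟨fun _ => univ, fun _ => ⟨∅, fun _ => univ, by simp, by simp⟩, fun _ => measure_lt_top _ _,
      iUnion_const _⟩
  refine (Measure.prod_eq_generateFrom MeasurableSpace.generateFrom_measurableSet
    generateFrom_squareCylinders MeasurableSpace.isPiSystem_measurableSet
    (isPiSystem_squareCylinders (fun _ => MeasurableSpace.isPiSystem_measurableSet)
      fun _ => MeasurableSet.univ) v.toFiniteSpanningSetsIn hspan ?_).symm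
  rintro A (hA : MeasurableSet A) _ ⟨I, t, ht, rfl⟩
  replace ht : ∀ i, MeasurableSet (t i) := fun i => ht i trivial
  set g : ℕ → Set W := fun i => Nat.casesOn i A t
  have hpre : (fun y : ℕ → W => (y 0, fun n => y (n + 1))) ⁻¹' (A ×ˢ (I : Set ℕ).pi t) =
      ((insert 0 (I.map ⟨Nat.succ, Nat.succ_injective⟩) : Finset ℕ) : Set ℕ).pi g := by
    ext y
    simp [g]
  rw [Measure.map_apply (by fun_prop) (hA.prod (.pi I.countable_toSet fun i _ => ht i)), hpre,
    Measure.infinitePi_pi _ fun i _ => by cases i <;> simp [g, hA, ht],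
    Finset.prod_insert (by simp), Finset.prod_map, Measure.infinitePi_pi _ fun i _ => ht i]
  rfl

end ProductMeasure

section Trajectories

variable {α W : Type*} {T : α → W → α}

theorem traj_succ_eq_traj_tail (x : α) (y : ℕ → W) (n : ℕ) :
    traj T x y (n + 1) = traj T (T x (y 0)) (fun k => y (k + 1)) n := by
  induction n with
  | zero => rfl
  | succ n ih => exact congrArg (T · (y (n + 1))) ih

theorem traj_mem_of_mapsTo {X : Set α} (hTX : ∀ x ∈ X, ∀ w, T x w ∈ X) {x : α} (hx : x ∈ X)
    (y : ℕ → W) (n : ℕ) : traj T x y n ∈ X := by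
  induction n with
  | zero => exact hx
  | succ n ih => exact hTX _ ih _

theorem measure_forall_le_traj_mem_eq_zero [MeasurableSpace W] (P : Measure (ℕ → W))
    {B : Set α} {x : α} (hx : x ∉ B) (n : ℕ) : P {y | ∀ k ≤ n, traj T x y k ∈ B} = 0 :=
  measure_mono_null (fun _ hy => absurd (hy 0 n.zero_le) hx) measure_empty

variable [MeasurableSpace α] [MeasurableSpace W]

theorem measurable_traj (hT : Measurable (Function.uncurry T)) :
    Measurable fun p : α × (ℕ → W) => traj T p.1 p.2 := by
  refine measurable_pi_lambda _ fun n => ?_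
  induction n with
  | zero => exact measurable_fst
  | succ n ih => exact hT.comp (ih.prodMk ((measurable_pi_apply n).comp measurable_snd))

variable (v : Measure W) [IsProbabilityMeasure v]

local notation "P" => Measure.infinitePi fun _ : ℕ => v

theorem measurable_measure_traj_mem (hT : Measurable (Function.uncurry T))
    {E : Set (ℕ → α)} (hE : MeasurableSet E) : Measurable fun x => P {y | traj T x y ∈ E} :=
  measurable_measure_prodMk_left (measurable_traj hT hE)

theorem measure_traj_tail_mem (hT : Measurable (Function.uncurry T)) (x : α)
    {E : Set (ℕ → α)} (hE : MeasurableSet E) :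
    P {y | (fun n => traj T x y (n + 1)) ∈ E} = ∫⁻ w, P {y | traj T (T x w) y ∈ E} ∂v := by
  have hF : MeasurableSet {p : W × (ℕ → W) | traj T (T x p.1) p.2 ∈ E} :=
    have hTx : Measurable (T x) := hT.of_uncurry_left
    (measurable_traj hT).comp (f := fun p : W × (ℕ → W) => (T x p.1, p.2)) (by fun_prop) hE
  have hpre : {y | (fun n => traj T x y (n + 1)) ∈ E} =
      (fun y : ℕ → W => (y 0, fun n => y (n + 1))) ⁻¹' {p | traj T (T x p.1) p.2 ∈ E} := by
    ext y
    simp only [traj_succ_eq_traj_tail, mem_preimage, mem_ofPred_eq]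
  rw [hpre, ← Measure.map_apply (by fun_prop) hF, Measure.infinitePi_map_head_tail,
    Measure.prod_apply hF]
  rfl

theorem measure_forall_le_succ_traj_mem (hT : Measurable (Function.uncurry T)) {B : Set α}
    (hB : MeasurableSet B) (n : ℕ) (x : α) :
    P {y | ∀ k ≤ n + 1, traj T x y k ∈ B} =
      B.indicator (fun x => ∫⁻ w, P {y | ∀ k ≤ n, traj T (T x w) y k ∈ B} ∂v) x := by
  by_cases hx : x ∈ B
  · have hset : {y | ∀ k ≤ n + 1, traj T x y k ∈ B} =
        {y | (fun k => traj T x y (k + 1)) ∈ {z : ℕ → α | ∀ k ≤ n, z k ∈ B}} := by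
      ext y
      refine ⟨fun h k hk => h (k + 1) (by omega), fun h k hk => ?_⟩
      cases k with
      | zero => exact hx
      | succ k => exact h k (by omega)
    rw [indicator_of_mem hx, hset, measure_traj_tail_mem v hT x]
    · rfl
    · exact measurableSet_setOfPred.2 (by fun_prop)
  · rw [indicator_of_notMem hx, measure_forall_le_traj_mem_eq_zero _ hx]

theorem measure_traj_mem_and_mem_eq_zero (hT : Measurable (Function.uncurry T)) {A : Set α}
    (hA : MeasurableSet A) {E : Set (ℕ → α)} (hE : MeasurableSet E)
    (hshift : ∀ z : ℕ → α, (fun n => z (n + 1)) ∈ E ↔ z ∈ E)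
    (hAE : ∀ x ∈ A, P {y | traj T x y ∈ E} = 0) (k : ℕ) (x : α) :
    P {y | traj T x y k ∈ A ∧ traj T x y ∈ E} = 0 := by
  induction k generalizing x with
  | zero =>
    by_cases hx : x ∈ A
    · exact measure_mono_null (fun _ hy => hy.2) (hAE x hx)
    · exact measure_mono_null (fun _ hy => absurd hy.1 hx) measure_empty
  | succ k ih =>
    have hset : {y | traj T x y (k + 1) ∈ A ∧ traj T x y ∈ E} =
        {y | (fun n => traj T x y (n + 1)) ∈ {z : ℕ → α | z k ∈ A ∧ z ∈ E}} := by
      ext y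
      simp only [mem_ofPred_eq, hshift]
    rw [hset, measure_traj_tail_mem v hT x
      (show MeasurableSet {z : ℕ → α | z k ∈ A ∧ z ∈ E} from (measurable_pi_apply k hA).inter hE)]
    exact (lintegral_congr fun w => ih (T x w)).trans lintegral_zero

theorem measure_traj_mem_le_measure_forall_traj_notMem (hT : Measurable (Function.uncurry T))
    {A : Set α} (hA : MeasurableSet A) {E : Set (ℕ → α)} (hE : MeasurableSet E)
    (hshift : ∀ z : ℕ → α, (fun n => z (n + 1)) ∈ E ↔ z ∈ E)
    (hAE : ∀ x ∈ A, P {y | traj T x y ∈ E} = 0) (x : α) :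
    P {y | traj T x y ∈ E} ≤ P {y | ∀ k, traj T x y k ∉ A} :=
  calc P {y | traj T x y ∈ E}
      ≤ P ({y | ∀ k, traj T x y k ∉ A} ∪ ⋃ k, {y | traj T x y k ∈ A ∧ traj T x y ∈ E}) := by
        refine measure_mono fun y hy => ?_
        by_cases h : ∀ k, traj T x y k ∉ A
        · exact Or.inl h
        · push Not at h
          obtain ⟨k, hk⟩ := h
          exact Or.inr (mem_iUnion.2 ⟨k, hk, hy⟩)
    _ ≤ P {y | ∀ k, traj T x y k ∉ A} + P (⋃ k, {y | traj T x y k ∈ A ∧ traj T x y ∈ E}) :=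
        measure_union_le _ _
    _ = P {y | ∀ k, traj T x y k ∉ A} := by
        rw [measure_iUnion_null fun k =>
          measure_traj_mem_and_mem_eq_zero v hT hA hE hshift hAE k x, add_zero]

end Trajectories

section PerronFrobenius

variable {α W : Type*} [MeasurableSpace α] [MeasurableSpace W] {T : α → W → α}
  {v : Measure W} {S : Set α}

theorem lintegral_P1 [SFinite v] (hT : Measurable (Function.uncurry T)) (hS : MeasurableSet S)
    (μ : Measure α) {f : α → ℝ≥0∞} (hf : Measurable f) :
    ∫⁻ x, f x ∂(P1 T v S μ) = ∫⁻ x in S, ∫⁻ w, S.indicator f (T x w) ∂v ∂μ := by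
  have hκ : Measurable fun x => v.map (T x) := by
    have h : ∀ x, v.map (T x) = (v.map (Prod.mk x)).map (Function.uncurry T) := fun x =>
      (Measure.map_map hT measurable_prodMk_left).symm
    simp_rw [h]
    exact (Measure.measurable_map _ hT).comp Measurable.map_prodMk_left
  rw [P1, ← lintegral_indicator hS,
    Measure.lintegral_bind hκ.aemeasurable (hf.indicator hS).aemeasurable]
  exact lintegral_congr fun x => lintegral_map (hf.indicator hS) hT.of_uncurry_left

variable (v) [IsProbabilityMeasure v]

local notation "P" => Measure.infinitePi fun _ : ℕ => v

theorem lintegral_measure_forall_le_traj_mem_le (hT : Measurable (Function.uncurry T))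
    (hS : MeasurableSet S) {B : Set α} (hB : MeasurableSet B) (hBS : B ⊆ S) (n : ℕ)
    (μ : Measure α) : ∫⁻ x, P {y | ∀ k ≤ n, traj T x y k ∈ B} ∂μ ≤ ((P1 T v S)^[n] μ) B := by
  induction n generalizing μ with
  | zero =>
    calc ∫⁻ x, P {y | ∀ k ≤ 0, traj T x y k ∈ B} ∂μ ≤ ∫⁻ x, B.indicator 1 x ∂μ := by
          refine lintegral_mono fun x => ?_
          by_cases hx : x ∈ B
          · simpa [indicator_of_mem hx] using prob_le_one
          · rw [measure_forall_le_traj_mem_eq_zero _ hx]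
            exact zero_le
      _ = μ B := lintegral_indicator_one hB
  | succ n ih =>
    set f := fun x => P {y | ∀ k ≤ n, traj T x y k ∈ B}
    have hf : Measurable f :=
      measurable_measure_traj_mem v hT (E := {z | ∀ k ≤ n, z k ∈ B})
        (measurableSet_setOfPred.2 (by fun_prop))
    have hfS : S.indicator f = f := indicator_eq_self.2 fun x hx =>
      hBS (by_contra fun hxB => hx (measure_forall_le_traj_mem_eq_zero _ hxB n))
    calc ∫⁻ x, P {y | ∀ k ≤ n + 1, traj T x y k ∈ B} ∂μ
        = ∫⁻ x in B, ∫⁻ w, f (T x w) ∂v ∂μ := by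
          simp_rw [measure_forall_le_succ_traj_mem v hT hB]
          exact lintegral_indicator hB _
      _ ≤ ∫⁻ x in S, ∫⁻ w, f (T x w) ∂v ∂μ := lintegral_mono_set hBS
      _ = ∫⁻ x, f x ∂(P1 T v S μ) := by rw [lintegral_P1 hT hS μ hf, hfS]
      _ ≤ ((P1 T v S)^[n] (P1 T v S μ)) B := ih _
      _ = ((P1 T v S)^[n + 1] μ) B := by rw [Function.iterate_succ_apply]

theorem ae_measure_forall_traj_mem_eq_zero (hT : Measurable (Function.uncurry T))
    (hS : MeasurableSet S) {B : Set α} (hB : MeasurableSet B) (hBS : B ⊆ S) (μ : Measure α)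
    (hdecay : 0 < μ B → Tendsto (fun n => ((P1 T v S)^[n] μ) B) atTop (𝓝 0)) :
    ∀ᵐ x ∂μ, P {y | ∀ k, traj T x y k ∈ B} = 0 := by
  have hle : ∀ n, ∫⁻ x, P {y | ∀ k, traj T x y k ∈ B} ∂μ ≤ ((P1 T v S)^[n] μ) B := fun n =>
    (lintegral_mono fun _ => measure_mono (ofPred_subset_ofPred.2 fun _ hy k _ => hy k)).trans
      (lintegral_measure_forall_le_traj_mem_le v hT hS hB hBS n μ)
  have hzero : ∫⁻ x, P {y | ∀ k, traj T x y k ∈ B} ∂μ = 0 := by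
    refine le_antisymm ?_ zero_le
    rcases eq_zero_or_pos (μ B) with hμB | hμB
    · simpa [hμB] using hle 0
    · exact ge_of_tendsto' (hdecay hμB) hle
  exact (lintegral_eq_zero_iff (measurable_measure_traj_mem v hT (E := {z | ∀ k, z k ∈ B})
    (measurableSet_setOfPred.2 (by fun_prop)))).1 hzero

end PerronFrobenius

theorem ae_almost_sure_stable_of_pf_iterates_tendsto_zero_general
    {d : ℕ} {Wsp : Type*} [MeasurableSpace Wsp]
    (X : Set (EuclideanSpace ℝ (Fin d))) (hX : IsCompact X)
    (v : Measure Wsp) [IsProbabilityMeasure v]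
    (T : EuclideanSpace ℝ (Fin d) → Wsp → EuclideanSpace ℝ (Fin d))
    (hT : Measurable (Function.uncurry T))
    (hTX : ∀ x ∈ X, ∀ y, T x y ∈ X)
    -- the infinite product measure `v^∞` on `W^ℕ`
    (vInf : Measure (ℕ → Wsp))
    (hvInf : ∀ (n : ℕ) (f : Fin n → Set Wsp), (∀ i, MeasurableSet (f i)) →
      vInf {y : ℕ → Wsp | ∀ i : Fin n, y (i : ℕ) ∈ f i} = ∏ i, v (f i))
    -- local stability assumption: `O` is a neighborhood of `0` in `X` such that, starting
    -- from any `x₀ ∈ O`, almost surely the trajectory stays in `O` and converges to `0`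
    (O : Set (EuclideanSpace ℝ (Fin d))) (hO : O ∈ nhdsWithin 0 X)
    (hstab : ∀ x₀ ∈ O, ∀ᵐ y ∂vInf,
      (∀ n : ℕ, traj T x₀ y n ∈ O) ∧ Tendsto (traj T x₀ y) atTop (nhds 0))
    (m : Measure (EuclideanSpace ℝ (Fin d))) (hmX : m Xᶜ = 0)
    -- main hypothesis: decay of the iterates of `P₁` outside every small neighborhood `U(ε)`
    (hmain : ∀ ε : ℝ, 0 < ε → X ∩ ball 0 ε ⊆ O →
      ∀ B : Set (EuclideanSpace ℝ (Fin d)), MeasurableSet B → B ⊆ X \ ball 0 ε →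
        0 < m B →
        Tendsto (fun n => ((P1 T v (X \ {0}))^[n] m) B) atTop (nhds 0)) :
    -- conclusion: `x = 0` is a.e. almost surely stable w.r.t. `m`
    ∀ δ : ENNReal, 0 < δ →
      m {x : EuclideanSpace ℝ (Fin d) |
          δ ≤ vInf {y : ℕ → Wsp | ¬ Tendsto (traj T x y) atTop (nhds 0)}} = 0 := by
  intro δ hδ
  obtain rfl := Measure.eq_infinitePi_of_fin_cylinders v hvInf
  obtain ⟨ε, hε, hεO⟩ := Metric.mem_nhdsWithin_iff.1 hO
  have hXm : MeasurableSet X := hX.isClosed.measurableSet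
  have hBm : MeasurableSet (X \ ball 0 ε) := hXm.diff measurableSet_ball
  have hstay := ae_measure_forall_traj_mem_eq_zero v hT (hXm.diff (measurableSet_singleton 0)) hBm
    (sdiff_subset_sdiff_right (singleton_subset_iff.2 (mem_ball_self hε))) m
    (hmain ε hε (inter_comm X _ ▸ hεO) _ hBm subset_rfl)
  have hconv : ∀ x ∈ X, Measure.infinitePi (fun _ => v) {y | ¬ Tendsto (traj T x y) atTop (𝓝 0)}
      ≤ Measure.infinitePi (fun _ => v) {y | ∀ k, traj T x y k ∈ X \ ball 0 ε} := fun x hx =>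
    (measure_traj_mem_le_measure_forall_traj_notMem v hT (measurableSet_ball.inter hXm)
      (measurableSet_tendsto _ measurable_pi_apply).compl
      (fun z => not_congr (tendsto_add_atTop_iff_nat 1))
      (fun x hx => ae_iff.1 ((hstab x (hεO hx)).mono fun _ hy => hy.2)) x).trans
    (measure_mono fun y hy k =>
      ⟨traj_mem_of_mapsTo hTX hx y k, fun hk => hy k ⟨hk, traj_mem_of_mapsTo hTX hx y k⟩⟩)
  refine measure_mono_null ?_ (ae_iff.1 (hstay.and (mem_ae_iff.2 hmX)))
  rintro x (hx : δ ≤ _) ⟨hx0, hxX⟩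
  exact hδ.ne' (le_zero_iff.1 (hx.trans ((hconv x hxX).trans hx0.le)))

/-- if `[P₁^n m](B) → 0` for every Borel `B ⊆ X \ U(ε)` with `m(B) > 0`,
for every sufficiently small `ε > 0` (i.e. every `ε > 0` with `U(ε) ⊆ O`), then the
equilibrium `x = 0` is almost everywhere almost surely stable with respect to `m`.
Here `vInf` is the infinite product measure `v^∞` on `W^ℕ`, characterized on cylinders. -/
theorem ae_almost_sure_stable_of_pf_iterates_tendsto_zero
    {d : ℕ} {Wsp : Type*} [MeasurableSpace Wsp]
    (X : Set (EuclideanSpace ℝ (Fin d))) (hX : IsCompact X)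
    (v : Measure Wsp) [IsProbabilityMeasure v]
    (T : EuclideanSpace ℝ (Fin d) → Wsp → EuclideanSpace ℝ (Fin d))
    (hT : Measurable (Function.uncurry T))
    (hTcont : ∀ y : Wsp, Continuous fun x => T x y)
    (hTX : ∀ x ∈ X, ∀ y, T x y ∈ X)
    (heq : ∀ y : Wsp, T 0 y = 0)
    -- the infinite product measure `v^∞` on `W^ℕ`
    (vInf : Measure (ℕ → Wsp)) [IsProbabilityMeasure vInf]
    (hvInf : ∀ (n : ℕ) (f : Fin n → Set Wsp), (∀ i, MeasurableSet (f i)) →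
      vInf {y : ℕ → Wsp | ∀ i : Fin n, y (i : ℕ) ∈ f i} = ∏ i, v (f i))
    -- local stability assumption: `O` is a neighborhood of `0` in `X` such that, starting
    -- from any `x₀ ∈ O`, almost surely the trajectory stays in `O` and converges to `0`
    (O : Set (EuclideanSpace ℝ (Fin d))) (hO : O ∈ nhdsWithin 0 X) (hOX : O ⊆ X)
    (hstab : ∀ x₀ ∈ O, ∀ᵐ y ∂vInf,
      (∀ n : ℕ, traj T x₀ y n ∈ O) ∧ Tendsto (traj T x₀ y) atTop (nhds 0))
    (m : Measure (EuclideanSpace ℝ (Fin d))) [IsFiniteMeasure m] (hmX : m Xᶜ = 0)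
    -- main hypothesis: decay of the iterates of `P₁` outside every small neighborhood `U(ε)`
    (hmain : ∀ ε : ℝ, 0 < ε → X ∩ ball 0 ε ⊆ O →
      ∀ B : Set (EuclideanSpace ℝ (Fin d)), MeasurableSet B → B ⊆ X \ ball 0 ε →
        0 < m B →
        Tendsto (fun n => ((P1 T v (X \ {0}))^[n] m) B) atTop (nhds 0)) :
    -- conclusion: `x = 0` is a.e. almost surely stable w.r.t. `m`
    ∀ δ : ENNReal, 0 < δ →
      m {x : EuclideanSpace ℝ (Fin d) |
          δ ≤ vInf {y : ℕ → Wsp | ¬ Tendsto (traj T x y) atTop (nhds 0)}} = 0 :=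
  ae_almost_sure_stable_of_pf_iterates_tendsto_zero_general X hX v T hT hTX vInf hvInf O hO hstab m
    hmX hmain
end
end

section
/- Fix ε > 0 and a finite Borel measure m on X. Suppose there exist K < ∞ and β ∈ (0,1) such that [P₁^n m](B) ≤ K β^n for every n ≥ 1 and every Borel B ⊆ X \ U(ε) with m(B) > 0. Then for every α with β < α < 1, every such B, and every n ≥ 1, m{x ∈ X : v^n{w ∈ W^n : T^n(x,w) ∈ B} ≥ α^n} ≤ K (β/α)^n. In particular, x = 0 is almost everywhere stochastically stable with geometric decay with respect to m. -/
/-!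
Unwinding the iterates, `[P₁ⁿ m](B)` is the integral over `X \ {0}` of the `n`-step transition
probability `x ↦ vⁿ{w : Tⁿ(x,w) ∈ B}`: a trajectory leaving `X \ {0}` is trapped at the
fixed point `0` and never reaches `B`. As this function vanishes at `0` and `m` lives on `X`,
its full `m`-integral is at most `K βⁿ`, and Markov's inequality at level `αⁿ` gives
`K (β/α)ⁿ`.
-/

open MeasureTheory Filter Metric Set

noncomputable section

/-- The `n`-step composed map `T^n : X × W^n → X`. -/
def Tn {α Wsp : Type*} (T : α → Wsp → α) : (n : ℕ) → α → (Fin n → Wsp) → α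
  | 0, x, _ => x
  | n + 1, x, w => T (Tn T n x fun i => w i.castSucc) (w (Fin.last n))

open scoped ENNReal

section Dynamics

variable {E W : Type*} {T : E → W → E}

theorem Tn_succ_eq_tail (n : ℕ) (x : E) (w : Fin (n + 1) → W) :
    Tn T (n + 1) x w = Tn T n (T x (w 0)) (Fin.tail w) := by
  induction n with
  | zero => rfl
  | succ n ih =>
    change T (Tn T (n + 1) x (Fin.init w)) (w (Fin.last (n + 1))) =
      T (Tn T n (T x (w 0)) (Fin.init (Fin.tail w))) (w (Fin.last n).succ)
    rw [ih, Fin.tail_init_eq_init_tail]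
    rfl

theorem Tn_mem_of_mem {Z : Set E} (hZ : ∀ z ∈ Z, ∀ y, T z y ∈ Z) {x : E} (hx : x ∈ Z) :
    ∀ (n : ℕ) (w : Fin n → W), Tn T n x w ∈ Z
  | 0, _ => hx
  | n + 1, w => hZ _ (Tn_mem_of_mem hZ hx n (Fin.init w)) _

variable [MeasurableSpace E] [MeasurableSpace W]

theorem measurable_uncurry_Tn (hT : Measurable (Function.uncurry T)) (n : ℕ) :
    Measurable (Function.uncurry (Tn T n)) := by
  induction n with
  | zero => exact measurable_fst
  | succ n ih =>
    have hinit : Measurable fun p : E × (Fin (n + 1) → W) => (p.1, Fin.init p.2) :=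
      measurable_fst.prodMk
        (measurable_pi_lambda _ fun i => (measurable_pi_apply _).comp measurable_snd)
    exact hT.comp ((ih.comp hinit).prodMk ((measurable_pi_apply _).comp measurable_snd))

end Dynamics

section TransitionProb

variable {E W : Type*} [MeasurableSpace W] {T : E → W → E} {v : Measure W}

def transitionProb (T : E → W → E) (v : Measure W) (n : ℕ) (x : E) (A : Set E) : ℝ≥0∞ :=
  Measure.pi (fun _ : Fin n => v) {w | Tn T n x w ∈ A}

theorem transitionProb_zero (x : E) (A : Set E) :
    transitionProb T v 0 x A = A.indicator 1 x := by
  by_cases hx : x ∈ A <;> simp [transitionProb, Tn, hx]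

theorem transitionProb_eq_zero_of_mem {Z A : Set E} (hZ : ∀ z ∈ Z, ∀ y, T z y ∈ Z)
    (hZA : Disjoint Z A) (n : ℕ) {z : E} (hz : z ∈ Z) : transitionProb T v n z A = 0 := by
  have : {w : Fin n → W | Tn T n z w ∈ A} = ∅ :=
    eq_empty_of_forall_notMem fun w hw => hZA.notMem_of_mem_left (Tn_mem_of_mem hZ hz n w) hw
  simp [transitionProb, this]

variable [MeasurableSpace E]

theorem measurable_transitionProb [SigmaFinite v] (hT : Measurable (Function.uncurry T)) (n : ℕ)
    {A : Set E} (hA : MeasurableSet A) : Measurable fun x => transitionProb T v n x A :=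
  measurable_measure_prodMk_left (measurable_uncurry_Tn hT n hA)

theorem transitionProb_succ [SigmaFinite v] (hT : Measurable (Function.uncurry T)) (n : ℕ)
    (x : E) {A : Set E} (hA : MeasurableSet A) :
    transitionProb T v (n + 1) x A = ∫⁻ y, transitionProb T v n (T x y) A ∂v := by
  have hpre : {w : Fin (n + 1) → W | Tn T (n + 1) x w ∈ A} =
      MeasurableEquiv.piFinSuccAbove (fun _ => W) 0 ⁻¹' {p | Tn T n (T x p.1) p.2 ∈ A} := by
    ext w
    simp [Tn_succ_eq_tail]
  have hmeas : MeasurableSet {p : W × (Fin n → W) | Tn T n (T x p.1) p.2 ∈ A} :=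
    (measurable_uncurry_Tn hT n).comp
      (((hT.comp measurable_prodMk_left).comp measurable_fst).prodMk measurable_snd) hA
  rw [transitionProb, hpre,
    (measurePreserving_piFinSuccAbove (fun _ => v) 0).measure_preimage_equiv,
    Measure.prod_apply hmeas]
  rfl

end TransitionProb

section PerronFrobenius

variable {E W : Type*} [MeasurableSpace E] [MeasurableSpace W] {T : E → W → E}
  {v : Measure W} {S : Set E}

theorem measurable_map_of_measurable_uncurry [SFinite v] (hT : Measurable (Function.uncurry T)) :
    Measurable fun x => v.map (T x) := by
  have hmap : ∀ x, v.map (T x) = (v.map (Prod.mk x)).map (Function.uncurry T) := fun x =>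
    (Measure.map_map hT measurable_prodMk_left).symm
  simp only [hmap]
  exact (Measure.measurable_map _ hT).comp Measurable.map_prodMk_left

theorem setLIntegral_P1 [SFinite v] (hT : Measurable (Function.uncurry T))
    (hS : MeasurableSet S) (μ : Measure E) {f : E → ℝ≥0∞} (hf : Measurable f) :
    ∫⁻ x in S, f x ∂(P1 T v S μ) =
      ∫⁻ x in S, ∫⁻ y, S.indicator f (T x y) ∂v ∂μ := by
  rw [P1, Measure.restrict_restrict hS, inter_self, ← lintegral_indicator hS,
    Measure.lintegral_bind (measurable_map_of_measurable_uncurry hT).aemeasurable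
      (hf.indicator hS).aemeasurable]
  refine lintegral_congr fun x => ?_
  exact lintegral_map (hf.indicator hS) (hT.comp measurable_prodMk_left)

theorem iterate_P1_apply [SigmaFinite v] (hT : Measurable (Function.uncurry T))
    (hS : MeasurableSet S) {Z : Set E} (hZ : ∀ z ∈ Z, ∀ y, T z y ∈ Z)
    (hSZ : ∀ x ∈ S, ∀ y, T x y ∈ S ∪ Z) {A : Set E} (hA : MeasurableSet A) (hAS : A ⊆ S)
    (hZA : Disjoint Z A) (n : ℕ) (μ : Measure E) :
    ((P1 T v S)^[n] μ) A = ∫⁻ x in S, transitionProb T v n x A ∂μ := by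
  induction n generalizing μ with
  | zero =>
    simp only [transitionProb_zero, Function.iterate_zero_apply,
      lintegral_indicator_one hA, Measure.restrict_apply hA, inter_eq_left.2 hAS]
  | succ n ih =>
    have hstay : ∀ x ∈ S, ∀ y,
        S.indicator (transitionProb T v n · A) (T x y) = transitionProb T v n (T x y) A := by
      intro x hx y
      by_cases hy : T x y ∈ S
      · exact indicator_of_mem hy _
      · rw [indicator_of_notMem hy,
          transitionProb_eq_zero_of_mem hZ hZA n ((hSZ x hx y).resolve_left hy)]
    rw [Function.iterate_succ_apply, ih,
      setLIntegral_P1 hT hS μ (measurable_transitionProb hT n hA)]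
    refine setLIntegral_congr_fun hS fun x hx => ?_
    simp only [hstay x hx, transitionProb_succ hT n x hA]

theorem iterate_P1_apply_eq_lintegral [Zero E] [MeasurableSingletonClass E] [SigmaFinite v]
    (hT : Measurable (Function.uncurry T)) {X : Set E} (hX : MeasurableSet X)
    (hTX : ∀ x ∈ X, ∀ y, T x y ∈ X) (heq : ∀ y, T 0 y = 0) {μ : Measure E}
    (hμX : μ Xᶜ = 0) {A : Set E} (hA : MeasurableSet A) (hAX : A ⊆ X \ {0}) (n : ℕ) :
    ((P1 T v (X \ {0}))^[n] μ) A = ∫⁻ x, transitionProb T v n x A ∂μ := by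
  have hS : MeasurableSet (X \ {0}) := hX.diff (measurableSet_singleton 0)
  have h0 : ∀ z ∈ ({0} : Set E), ∀ y, T z y ∈ ({0} : Set E) := by simp [heq]
  have h0A : Disjoint {0} A := (subset_sdiff.1 hAX).2.symm
  have hXS : ∀ x ∈ X \ {0}, ∀ y, T x y ∈ X \ {0} ∪ {0} := fun x hx y => by
    simp [hTX x hx.1 y]
  have hae :
      (transitionProb T v n · A) =ᵐ[μ] (X \ {0}).indicator (transitionProb T v n · A) := by
    filter_upwards [mem_ae_iff.2 hμX] with x hx
    rcases eq_or_ne x 0 with rfl | hx0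
    · simp [transitionProb_eq_zero_of_mem h0 h0A n rfl]
    · rw [indicator_of_mem (mem_sdiff_singleton.2 ⟨hx, hx0⟩)]
  rw [iterate_P1_apply hT hS h0 hXS hA hAX h0A n μ, lintegral_congr_ae hae,
    lintegral_indicator hS]

end PerronFrobenius

theorem meas_ge_pow_le_of_lintegral_le {Ω : Type*} [MeasurableSpace Ω] {μ : Measure Ω}
    {f : Ω → ℝ≥0∞} (hf : AEMeasurable f μ) {K β α : ℝ≥0∞} (hα0 : α ≠ 0) (hα : α ≠ ⊤)
    {n : ℕ} (hint : ∫⁻ x, f x ∂μ ≤ K * β ^ n) :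
    μ {x | α ^ n ≤ f x} ≤ K * (β / α) ^ n :=
  calc μ {x | α ^ n ≤ f x}
      ≤ (∫⁻ x, f x ∂μ) / α ^ n :=
        meas_ge_le_lintegral_div hf (pow_ne_zero n hα0) (ENNReal.pow_ne_top hα)
    _ ≤ K * β ^ n / α ^ n := by gcongr
    _ = K * (β / α) ^ n := by
      rw [mul_div_assoc, div_eq_mul_inv, div_eq_mul_inv, mul_pow, ENNReal.inv_pow]

theorem geometric_decay_of_pf_iterates_geometric_general
    {d : ℕ} {Wsp : Type*} [MeasurableSpace Wsp]
    (X : Set (EuclideanSpace ℝ (Fin d))) (hX : IsCompact X)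
    (v : Measure Wsp) [IsProbabilityMeasure v]
    (T : EuclideanSpace ℝ (Fin d) → Wsp → EuclideanSpace ℝ (Fin d))
    (hT : Measurable (Function.uncurry T))
    (hTX : ∀ x ∈ X, ∀ y, T x y ∈ X)
    (heq : ∀ y : Wsp, T 0 y = 0)
    (ε : ℝ) (hε : 0 < ε)
    (m : Measure (EuclideanSpace ℝ (Fin d))) (hmX : m Xᶜ = 0)
    (K : ENNReal) (β : ENNReal)
    (hmain : ∀ n : ℕ, 1 ≤ n →
      ∀ B : Set (EuclideanSpace ℝ (Fin d)), MeasurableSet B → B ⊆ X \ ball 0 ε →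
        0 < m B → ((P1 T v (X \ {0}))^[n] m) B ≤ K * β ^ n) :
    ∀ α : ENNReal, β < α → α < 1 →
      ∀ B : Set (EuclideanSpace ℝ (Fin d)), MeasurableSet B → B ⊆ X \ ball 0 ε →
        0 < m B → ∀ n : ℕ, 1 ≤ n →
          m {x : EuclideanSpace ℝ (Fin d) |
              α ^ n ≤ (Measure.pi fun _ : Fin n => v) {w : Fin n → Wsp | Tn T n x w ∈ B}}
            ≤ K * (β / α) ^ n := by
  intro α hβα hα1 B hBm hBsub hmB n hn
  have hBS : B ⊆ X \ {0} := subset_sdiff.2 ⟨fun x hx => (hBsub hx).1,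
    disjoint_singleton_right.2 fun h0 => (hBsub h0).2 (mem_ball_self hε)⟩
  have hint : ∫⁻ x, transitionProb T v n x B ∂m ≤ K * β ^ n := by
    rw [← iterate_P1_apply_eq_lintegral hT hX.isClosed.measurableSet hTX heq hmX hBm hBS]
    exact hmain n hn B hBm hBsub hmB
  exact meas_ge_pow_le_of_lintegral_le (measurable_transitionProb hT n hBm).aemeasurable
    hβα.ne_bot (hα1.trans ENNReal.one_lt_top).ne hint

/-- if `[P₁^n m](B) ≤ K βⁿ` for all `n ≥ 1` and all Borel `B ⊆ X \ U(ε)` with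
`m(B) > 0`, then for every `α ∈ (β,1)`, every such `B` and every `n ≥ 1`,
`m{x : vⁿ{w : Tⁿ(x,w) ∈ B} ≥ αⁿ} ≤ K (β/α)ⁿ`; in particular `x = 0` is almost everywhere
stochastically stable with geometric decay with respect to `m`. -/
theorem geometric_decay_of_pf_iterates_geometric
    {d : ℕ} {Wsp : Type*} [MeasurableSpace Wsp]
    (X : Set (EuclideanSpace ℝ (Fin d))) (hX : IsCompact X)
    (v : Measure Wsp) [IsProbabilityMeasure v]
    (T : EuclideanSpace ℝ (Fin d) → Wsp → EuclideanSpace ℝ (Fin d))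
    (hT : Measurable (Function.uncurry T))
    (hTX : ∀ x ∈ X, ∀ y, T x y ∈ X)
    (heq : ∀ y : Wsp, T 0 y = 0)
    (ε : ℝ) (hε : 0 < ε)
    (m : Measure (EuclideanSpace ℝ (Fin d))) [IsFiniteMeasure m] (hmX : m Xᶜ = 0)
    (K : ENNReal) (hK : K < ⊤) (β : ENNReal) (hβ0 : 0 < β) (hβ1 : β < 1)
    (hmain : ∀ n : ℕ, 1 ≤ n →
      ∀ B : Set (EuclideanSpace ℝ (Fin d)), MeasurableSet B → B ⊆ X \ ball 0 ε →
        0 < m B → ((P1 T v (X \ {0}))^[n] m) B ≤ K * β ^ n) :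
    ∀ α : ENNReal, β < α → α < 1 →
      ∀ B : Set (EuclideanSpace ℝ (Fin d)), MeasurableSet B → B ⊆ X \ ball 0 ε →
        0 < m B → ∀ n : ℕ, 1 ≤ n →
          m {x : EuclideanSpace ℝ (Fin d) |
              α ^ n ≤ (Measure.pi fun _ : Fin n => v) {w : Fin n → Wsp | Tn T n x w ∈ B}}
            ≤ K * (β / α) ^ n :=
  geometric_decay_of_pf_iterates_geometric_general X hX v T hT hTX heq ε hε m hmX K β hmain
end
end

section
/- Let V : X → [0,∞) be measurable and suppose there are constants 0 < a ≤ b and c ∈ (0,1) with a‖x‖^p ≤ V(x) ≤ b‖x‖^p for all x ∈ X and [U_T V](x) ≤ c V(x) for all x ∈ X. Then for every x₀ ∈ X and every n ≥ 1, ∫_{W^n} ‖T^n(x₀,w)‖^p dv^n(w) ≤ (b/a) c^n ‖x₀‖^p; i.e., the equilibrium x = 0 is p-th moment exponentially stable with K = b/a and decay rate β = c. -/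
open MeasureTheory Filter Metric Set

noncomputable section

/-- if a measurable `V : X → [0,∞)` satisfies `a‖x‖^p ≤ V(x) ≤ b‖x‖^p` and
`[U_T V](x) = ∫_W V(T(x,y)) dv(y) ≤ c V(x)` on `X` with `0 < a ≤ b`, `c ∈ (0,1)`, then
for every `x₀ ∈ X` and `n ≥ 1`, `∫_{Wⁿ} ‖Tⁿ(x₀,w)‖^p dvⁿ(w) ≤ (b/a) cⁿ ‖x₀‖^p`;
i.e. `x = 0` is `p`-th moment exponentially stable with `K = b/a` and rate `β = c`. -/
theorem pth_moment_stable_of_lyapunov_function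
    {d : ℕ} {Wsp : Type*} [MeasurableSpace Wsp]
    (X : Set (EuclideanSpace ℝ (Fin d))) (hX : IsCompact X)
    (v : Measure Wsp) [IsProbabilityMeasure v]
    (T : EuclideanSpace ℝ (Fin d) → Wsp → EuclideanSpace ℝ (Fin d))
    (hT : Measurable (Function.uncurry T))
    (hTX : ∀ x ∈ X, ∀ y, T x y ∈ X)
    (p : ℕ) (hp : 0 < p)
    (V : EuclideanSpace ℝ (Fin d) → ℝ) (hV : Measurable V)
    (hVnn : ∀ x ∈ X, 0 ≤ V x)
    (a b c : ℝ) (ha : 0 < a) (hab : a ≤ b) (hc0 : 0 < c) (hc1 : c < 1)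
    (hbound : ∀ x ∈ X, a * ‖x‖ ^ p ≤ V x ∧ V x ≤ b * ‖x‖ ^ p)
    (hkoop : ∀ x ∈ X, (∫ y, V (T x y) ∂v) ≤ c * V x) :
    ∀ x₀ ∈ X, ∀ n : ℕ, 1 ≤ n →
      (∫ w, ‖Tn T n x₀ w‖ ^ p ∂(Measure.pi fun _ : Fin n => v))
        ≤ (b / a) * c ^ n * ‖x₀‖ ^ p := by
  intro x₀ hx₀ n _
  -- a uniform bound on the norm over the compact set X
  obtain ⟨M, hM⟩ : ∃ M : ℝ, ∀ x ∈ X, ‖x‖ ≤ M := by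
    obtain ⟨M, hM⟩ := hX.isBounded.exists_norm_le
    exact ⟨M, hM⟩
  have hM0 : 0 ≤ M := le_trans (norm_nonneg _) (hM x₀ hx₀)
  -- membership of the iterates
  have hmem : ∀ n (w : Fin n → Wsp), Tn T n x₀ w ∈ X := by
    intro n
    induction n with
    | zero => intro w; exact hx₀
    | succ n ih => intro w; exact hTX _ (ih _) _
  -- measurability of the iterates
  have hmeas : ∀ n, Measurable fun w : Fin n → Wsp => Tn T n x₀ w := by
    intro n
    induction n with
    | zero => exact measurable_const
    | succ n ih =>
      have : Measurable fun w : Fin (n + 1) → Wsp =>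
          (Tn T n x₀ fun i => w i.castSucc, w (Fin.last n)) :=
        (ih.comp (measurable_pi_lambda _ fun i => measurable_pi_apply _)).prodMk
          (measurable_pi_apply _)
      exact hT.comp this
  have hVb : ∀ x ∈ X, |V x| ≤ b * M ^ p := by
    intro x hx
    rw [abs_of_nonneg (hVnn x hx)]
    refine (hbound x hx).2.trans ?_
    exact mul_le_mul_of_nonneg_left (pow_le_pow_left₀ (norm_nonneg _) (hM x hx) p)
      (le_trans ha.le hab)
  -- integrability of V along the iterates
  have hVint : ∀ n, Integrable (fun w : Fin n → Wsp => V (Tn T n x₀ w))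
      (Measure.pi fun _ : Fin n => v) := by
    intro n
    refine (integrable_const (b * M ^ p)).mono'
      ((hV.comp (hmeas n)).aestronglyMeasurable) (ae_of_all _ fun w => ?_)
    exact hVb _ (hmem n w)
  -- key estimate: the expected Lyapunov value decays geometrically
  have key : ∀ n : ℕ,
      (∫ w, V (Tn T n x₀ w) ∂(Measure.pi fun _ : Fin n => v)) ≤ c ^ n * V x₀ := by
    intro n
    induction n with
    | zero => simp [Tn]
    | succ n ih =>
      set μn : Measure (Fin n → Wsp) := Measure.pi fun _ : Fin n => v with hμn
      have hmp := measurePreserving_piFinSuccAbove (fun _ : Fin (n + 1) => v) (Fin.last n)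
      set e := MeasurableEquiv.piFinSuccAbove (fun _ : Fin (n + 1) => Wsp) (Fin.last n) with he
      have hGmeas : Measurable fun z : Wsp × (Fin n → Wsp) => V (T (Tn T n x₀ z.2) z.1) := by
        have : Measurable fun z : Wsp × (Fin n → Wsp) => (Tn T n x₀ z.2, z.1) :=
          ((hmeas n).comp measurable_snd).prodMk measurable_fst
        exact hV.comp (hT.comp this)
      have hGint : Integrable (fun z : Wsp × (Fin n → Wsp) => V (T (Tn T n x₀ z.2) z.1))
          (v.prod μn) := by
        refine (integrable_const (b * M ^ p)).mono' hGmeas.aestronglyMeasurable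
          (ae_of_all _ fun z => ?_)
        exact hVb _ (hTX _ (hmem n z.2) _)
      have step1 : (∫ w, V (Tn T (n + 1) x₀ w) ∂(Measure.pi fun _ : Fin (n + 1) => v))
          = ∫ z : Wsp × (Fin n → Wsp), V (T (Tn T n x₀ z.2) z.1) ∂(v.prod μn) := by
        rw [← hmp.integral_comp']
        refine integral_congr_ae (ae_of_all _ fun w => ?_)
        simp only [Tn, e, MeasurableEquiv.piFinSuccAbove, Fin.succAbove_last,
          MeasurableEquiv.coe_mk, Fin.insertNthEquiv, Equiv.coe_fn_symm_mk]
        have hrw : (Fin.last n).removeNth w = fun i => w i.castSucc := by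
          ext i; simp [Fin.removeNth]
        rw [hrw]
      have step2 : (∫ z : Wsp × (Fin n → Wsp), V (T (Tn T n x₀ z.2) z.1) ∂(v.prod μn))
          = ∫ w', ∫ y, V (T (Tn T n x₀ w') y) ∂v ∂μn :=
        integral_prod_symm _ hGint
      have step3 : (∫ w', ∫ y, V (T (Tn T n x₀ w') y) ∂v ∂μn)
          ≤ ∫ w', c * V (Tn T n x₀ w') ∂μn := by
        refine integral_mono hGint.integral_prod_right ((hVint n).const_mul c) fun w' => ?_
        exact hkoop _ (hmem n w')
      calc (∫ w, V (Tn T (n + 1) x₀ w) ∂(Measure.pi fun _ : Fin (n + 1) => v))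
          ≤ ∫ w', c * V (Tn T n x₀ w') ∂μn := by rw [step1, step2]; exact step3
        _ = c * ∫ w', V (Tn T n x₀ w') ∂μn := integral_const_mul c _
        _ ≤ c * (c ^ n * V x₀) := mul_le_mul_of_nonneg_left ih hc0.le
        _ = c ^ (n + 1) * V x₀ := by ring
  -- conclude
  set μn : Measure (Fin n → Wsp) := Measure.pi fun _ : Fin n => v
  have hnormint : Integrable (fun w : Fin n → Wsp => ‖Tn T n x₀ w‖ ^ p) μn := by
    refine (integrable_const (M ^ p)).mono'
      ((((hmeas n).norm).pow_const p).aestronglyMeasurable) (ae_of_all _ fun w => ?_)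
    rw [Real.norm_of_nonneg (pow_nonneg (norm_nonneg _) p)]
    exact pow_le_pow_left₀ (norm_nonneg _) (hM _ (hmem n w)) p
  have h1 : a * (∫ w, ‖Tn T n x₀ w‖ ^ p ∂μn) ≤ ∫ w, V (Tn T n x₀ w) ∂μn := by
    rw [← integral_const_mul]
    exact integral_mono (hnormint.const_mul a) (hVint n) fun w => (hbound _ (hmem n w)).1
  have h2 : (∫ w, V (Tn T n x₀ w) ∂μn) ≤ c ^ n * (b * ‖x₀‖ ^ p) :=
    (key n).trans (mul_le_mul_of_nonneg_left (hbound x₀ hx₀).2 (pow_nonneg hc0.le n))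
  have h3 : a * (∫ w, ‖Tn T n x₀ w‖ ^ p ∂μn) ≤ c ^ n * (b * ‖x₀‖ ^ p) := h1.trans h2
  rw [div_mul_eq_mul_div, div_mul_eq_mul_div, le_div_iff₀ ha]
  nlinarith [h3]
end
end

section
/- Suppose the equilibrium x = 0 is p-th moment exponentially stable: there exist K < ∞ and β ∈ (0,1) such that ∫_{W^n} ‖T^n(x,w)‖^p dv^n(w) ≤ K β^n ‖x‖^p for all x ∈ X and n ≥ 1. Let f(x) = ‖x‖^p. Then the series V(x) := Σ_{k=0}^∞ [U_T^k f](x) converges for every x ∈ X, V satisfies the resolvent identity V(x) = f(x) + [U_T V](x) (i.e., V = (I − U_T)^{-1} f), and with b := 1 + Kβ/(1−β) and c := 1 − 1/b ∈ (0,1) one has ‖x‖^p ≤ V(x) ≤ b ‖x‖^p and [U_T V](x) ≤ c V(x) for all x ∈ X. -/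
/-! Stability bounds the `k`-th term `U_T^k f (x)` of the series by `K βᵏ ‖x‖^p` for `k ≥ 1`, so the
series converges geometrically, with `‖x‖^p` (its `k = 0` term) `≤ V x ≤ b ‖x‖^p`. Splitting off
the first step of `T^{k+1}` and applying Fubini on `W × Wᵏ` gives `U_T^{k+1} f = U_T (U_T^k f)`;
this needs integrability, which holds because `X` is compact and invariant, so every `U_T^k f` is
bounded on `X`. The integrals of the nonnegative terms of `U_T V` then form the convergent series
`∑ U_T^{k+1} f (x)`, so `U_T` commutes with the sum and `V = f + U_T V`. Finally
`U_T V = V - f ≤ V - V / b = c V`. -/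

open MeasureTheory Filter Metric Set

noncomputable section

section ComposedMap

variable {α W : Type*} {T : α → W → α}

theorem Tn_succ' (n : ℕ) (x : α) (w : Fin (n + 1) → W) :
    Tn T (n + 1) x w = Tn T n (T x (w 0)) (fun i => w i.succ) := by
  induction n with
  | zero => rfl
  | succ n ih =>
    show T (Tn T (n + 1) x fun i => w i.castSucc) (w (Fin.last (n + 1)))
        = T (Tn T n (T x (w 0)) fun i => w i.succ.castSucc) (w (Fin.last n).succ)
    rw [ih]
    simp [Fin.succ_last, -Fin.castSucc_succ]

theorem Tn_mem {X : Set α} (hTX : ∀ x ∈ X, ∀ y, T x y ∈ X) {x : α} (hx : x ∈ X) :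
    ∀ (n : ℕ) (w : Fin n → W), Tn T n x w ∈ X
  | 0, _ => hx
  | n + 1, _ => hTX _ (Tn_mem hTX hx n _) _

theorem measurable_Tn [MeasurableSpace α] [MeasurableSpace W]
    (hT : Measurable (Function.uncurry T)) (n : ℕ) :
    Measurable (fun q : α × (Fin n → W) => Tn T n q.1 q.2) := by
  induction n with
  | zero => exact measurable_fst
  | succ n ih =>
    exact hT.comp ((ih.comp (measurable_fst.prodMk (measurable_pi_lambda _ fun i =>
      (measurable_pi_apply _).comp measurable_snd))).prodMk
      ((measurable_pi_apply _).comp measurable_snd))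

end ComposedMap

def koopmanPow {α W E : Type*} [MeasurableSpace W] [NormedAddCommGroup E] [NormedSpace ℝ E]
    (T : α → W → α) (v : Measure W) (k : ℕ) (g : α → E) (x : α) : E :=
  ∫ w, g (Tn T k x w) ∂Measure.pi fun _ : Fin k => v

theorem koopmanPow_nonneg {α W : Type*} [MeasurableSpace W] {T : α → W → α} {v : Measure W}
    {g : α → ℝ} (hg : 0 ≤ g) (k : ℕ) (x : α) : 0 ≤ koopmanPow T v k g x :=
  integral_nonneg fun _ => hg _

section Koopman

variable {α W E : Type*} [MeasurableSpace W] [NormedAddCommGroup E] [NormedSpace ℝ E]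
  {T : α → W → α} {v : Measure W} [IsProbabilityMeasure v] {g : α → E}

@[simp]
theorem koopmanPow_zero [CompleteSpace E] (g : α → E) (x : α) : koopmanPow T v 0 g x = g x := by
  change ∫ _, g x ∂_ = g x
  simp

theorem stronglyMeasurable_koopmanPow [MeasurableSpace α] (hT : Measurable (Function.uncurry T))
    (hg : StronglyMeasurable g) (k : ℕ) : StronglyMeasurable (koopmanPow T v k g) :=
  (hg.comp_measurable (measurable_Tn hT k)).integral_prod_right'

theorem norm_koopmanPow_le {X : Set α} (hTX : ∀ x ∈ X, ∀ y, T x y ∈ X) {C : ℝ}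
    (hgC : ∀ z ∈ X, ‖g z‖ ≤ C) {x : α} (hx : x ∈ X) (k : ℕ) :
    ‖koopmanPow T v k g x‖ ≤ C := by
  simpa [koopmanPow] using norm_integral_le_of_norm_le_const
    (μ := Measure.pi fun _ : Fin k => v) (.of_forall fun w => hgC _ (Tn_mem hTX hx k w))

theorem koopmanPow_succ [MeasurableSpace α] [CompleteSpace E] (hT : Measurable (Function.uncurry T))
    (hg : StronglyMeasurable g) {X : Set α} (hTX : ∀ x ∈ X, ∀ y, T x y ∈ X) {C : ℝ}
    (hgC : ∀ z ∈ X, ‖g z‖ ≤ C) {x : α} (hx : x ∈ X) (k : ℕ) :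
    koopmanPow T v (k + 1) g x = ∫ y, koopmanPow T v k g (T x y) ∂v := by
  have hq : Measurable fun q : W × (Fin k → W) => Tn T k (T x q.1) q.2 :=
    (measurable_Tn hT k).comp
      ((hT.comp (measurable_const.prodMk measurable_fst)).prodMk measurable_snd)
  have hint : Integrable (fun q : W × (Fin k → W) => g (Tn T k (T x q.1) q.2))
      (v.prod (Measure.pi fun _ : Fin k => v)) :=
    .of_bound (hg.comp_measurable hq).aestronglyMeasurable C
      (.of_forall fun q => hgC _ (Tn_mem hTX (hTX x hx q.1) k q.2))
  calc koopmanPow T v (k + 1) g x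
      = ∫ w, (fun q : W × (Fin k → W) => g (Tn T k (T x q.1) q.2))
          (MeasurableEquiv.piFinSuccAbove (fun _ : Fin (k + 1) => W) 0 w)
          ∂Measure.pi fun _ : Fin (k + 1) => v := by
        simp only [koopmanPow, Tn_succ']
        rfl
    _ = ∫ q, g (Tn T k (T x q.1) q.2) ∂v.prod (Measure.pi fun _ : Fin k => v) :=
        (measurePreserving_piFinSuccAbove (fun _ : Fin (k + 1) => v) 0).integral_comp'
          (fun q : W × (Fin k → W) => g (Tn T k (T x q.1) q.2))
    _ = ∫ y, koopmanPow T v k g (T x y) ∂v := integral_prod _ hint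

end Koopman

section Resolvent

variable {α W : Type*} [MeasurableSpace α] [MeasurableSpace W]
  {T : α → W → α} {v : Measure W} [IsProbabilityMeasure v] {g : α → ℝ}

theorem tsum_koopmanPow_eq_add_integral (hT : Measurable (Function.uncurry T))
    (hg : StronglyMeasurable g) (hg0 : 0 ≤ g) {X : Set α} (hTX : ∀ x ∈ X, ∀ y, T x y ∈ X)
    {C : ℝ} (hgC : ∀ z ∈ X, ‖g z‖ ≤ C) {x : α} (hx : x ∈ X)
    (hsum : Summable fun k => koopmanPow T v k g x) :
    ∑' k, koopmanPow T v k g x = g x + ∫ y, ∑' k, koopmanPow T v k g (T x y) ∂v := by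
  have hTx : Measurable (T x) := hT.comp (measurable_const.prodMk measurable_id)
  have hint : ∀ k, Integrable (fun y => koopmanPow T v k g (T x y)) v := fun k =>
    .of_bound ((stronglyMeasurable_koopmanPow hT hg k).comp_measurable hTx).aestronglyMeasurable
      C (.of_forall fun y => norm_koopmanPow_le hTX hgC (hTX x hx y) k)
  have hstep : ∀ k, ∫ y, ‖koopmanPow T v k g (T x y)‖ ∂v = koopmanPow T v (k + 1) g x :=
    fun k => by
      simp only [Real.norm_of_nonneg (koopmanPow_nonneg hg0 _ _),
        koopmanPow_succ hT hg hTX hgC hx]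
  rw [hsum.tsum_eq_zero_add, koopmanPow_zero, ← integral_tsum_of_summable_integral_norm hint
    (by simpa only [hstep] using (summable_nat_add_iff 1).mpr hsum)]
  simp only [koopmanPow_succ hT hg hTX hgC hx]

end Resolvent

section GeometricSeries

theorem hasSum_mul_pow_succ_mul {β : ℝ} (hβ0 : 0 ≤ β) (hβ1 : β < 1) (K c : ℝ) :
    HasSum (fun k : ℕ => K * β ^ (k + 1) * c) (K * β / (1 - β) * c) := by
  simpa [pow_succ, mul_assoc, mul_comm, mul_left_comm, div_eq_mul_inv] using
    (hasSum_geometric_of_lt_one hβ0 hβ1).mul_left (K * β * c)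

variable {a : ℕ → ℝ} {K β : ℝ}

theorem summable_of_succ_le_geometric (ha : ∀ k, 0 ≤ a k) (hβ0 : 0 ≤ β) (hβ1 : β < 1)
    (hK : ∀ k, a (k + 1) ≤ K * β ^ (k + 1) * a 0) : Summable a :=
  (summable_nat_add_iff 1).mp <|
    .of_nonneg_of_le (fun _ => ha _) hK (hasSum_mul_pow_succ_mul hβ0 hβ1 K (a 0)).summable

theorem tsum_le_of_succ_le_geometric (ha : ∀ k, 0 ≤ a k) (hβ0 : 0 ≤ β) (hβ1 : β < 1)
    (hK : ∀ k, a (k + 1) ≤ K * β ^ (k + 1) * a 0) :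
    ∑' k, a k ≤ (1 + K * β / (1 - β)) * a 0 := by
  have hgeo := hasSum_mul_pow_succ_mul hβ0 hβ1 K (a 0)
  have htail : ∑' k, a (k + 1) ≤ K * β / (1 - β) * a 0 :=
    hgeo.tsum_eq ▸ Summable.tsum_le_tsum hK
      ((summable_nat_add_iff 1).mpr (summable_of_succ_le_geometric ha hβ0 hβ1 hK)) hgeo.summable
  rw [(summable_of_succ_le_geometric ha hβ0 hβ1 hK).tsum_eq_zero_add]
  linarith

end GeometricSeries

theorem one_sub_one_div_mem_Ioo {b : ℝ} (hb : 1 < b) : 0 < 1 - 1 / b ∧ 1 - 1 / b < 1 := by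
  have : 1 / b < 1 := (div_lt_one (by linarith)).2 hb
  constructor <;> [linarith; linarith [one_div_pos.2 (zero_lt_one.trans hb)]]

theorem le_one_sub_one_div_mul_of_eq_add {V f U b : ℝ} (hb : 0 < b) (hV : V = f + U)
    (hVf : V ≤ b * f) : U ≤ (1 - 1 / b) * V := by
  have : V / b ≤ f := (div_le_iff₀ hb).2 (by linarith)
  have : (1 - 1 / b) * V = V - V / b := by ring
  linarith

theorem lyapunov_function_from_koopman_resolvent_general
    {d : ℕ} {Wsp : Type*} [MeasurableSpace Wsp]
    (X : Set (EuclideanSpace ℝ (Fin d))) (hX : IsCompact X)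
    (v : Measure Wsp) [IsProbabilityMeasure v]
    (T : EuclideanSpace ℝ (Fin d) → Wsp → EuclideanSpace ℝ (Fin d))
    (hT : Measurable (Function.uncurry T))
    (hTX : ∀ x ∈ X, ∀ y, T x y ∈ X)
    (p : ℕ)
    (K : ℝ) (hK : 0 < K) (β : ℝ) (hβ0 : 0 < β) (hβ1 : β < 1)
    (hstab : ∀ x ∈ X, ∀ n : ℕ, 1 ≤ n →
      (∫ w, ‖Tn T n x w‖ ^ p ∂(Measure.pi fun _ : Fin n => v)) ≤ K * β ^ n * ‖x‖ ^ p)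
    (V : EuclideanSpace ℝ (Fin d) → ℝ)
    (hVdef : V = fun x =>
      ∑' k : ℕ, ∫ w, ‖Tn T k x w‖ ^ p ∂(Measure.pi fun _ : Fin k => v)) :
    (0 < 1 - 1 / (1 + K * β / (1 - β)) ∧ 1 - 1 / (1 + K * β / (1 - β)) < 1) ∧
    ∀ x ∈ X,
      Summable (fun k : ℕ => ∫ w, ‖Tn T k x w‖ ^ p ∂(Measure.pi fun _ : Fin k => v)) ∧
      V x = ‖x‖ ^ p + ∫ y, V (T x y) ∂v ∧
      ‖x‖ ^ p ≤ V x ∧ V x ≤ (1 + K * β / (1 - β)) * ‖x‖ ^ p ∧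
      (∫ y, V (T x y) ∂v) ≤ (1 - 1 / (1 + K * β / (1 - β))) * V x := by
  have hb : 1 < 1 + K * β / (1 - β) :=
    lt_add_of_pos_right _ (div_pos (mul_pos hK hβ0) (sub_pos.2 hβ1))
  refine ⟨one_sub_one_div_mem_Ioo hb, fun x hx => ?_⟩
  set f : EuclideanSpace ℝ (Fin d) → ℝ := fun z => ‖z‖ ^ p
  obtain ⟨C, hC⟩ := hX.isBounded.exists_norm_le
  have hf : StronglyMeasurable f := (continuous_norm.pow p).stronglyMeasurable
  have hf0 : 0 ≤ f := fun z => by positivity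
  have hfC : ∀ z ∈ X, ‖f z‖ ≤ C ^ p := fun z hz => by
    rw [Real.norm_of_nonneg (hf0 z)]
    exact pow_le_pow_left₀ (norm_nonneg z) (hC z hz) p
  have hgeo : ∀ k, koopmanPow T v (k + 1) f x ≤ K * β ^ (k + 1) * koopmanPow T v 0 f x :=
    fun k => (koopmanPow_zero (T := T) (v := v) f x).symm ▸ hstab x hx (k + 1) k.succ_pos
  have hsum := summable_of_succ_le_geometric (koopmanPow_nonneg hf0 · x) hβ0.le hβ1 hgeo
  have hub := tsum_le_of_succ_le_geometric (koopmanPow_nonneg hf0 · x) hβ0.le hβ1 hgeo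
  have hres := tsum_koopmanPow_eq_add_integral hT hf hf0 hTX hfC hx hsum
  have hlb := hsum.le_tsum 0 fun k _ => koopmanPow_nonneg hf0 k x
  rw [koopmanPow_zero] at hub hlb
  subst hVdef
  exact ⟨hsum, hres, hlb, hub, le_one_sub_one_div_mul_of_eq_add (by linarith) hres hub⟩

/-- if `x = 0` is `p`-th moment exponentially stable,
`∫_{Wⁿ} ‖Tⁿ(x,w)‖^p dvⁿ ≤ K βⁿ ‖x‖^p`, then with `f(x) = ‖x‖^p` the series
`V(x) = Σ_{k=0}^∞ [U_T^k f](x)` converges, satisfies the resolvent identity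
`V(x) = f(x) + [U_T V](x)` (i.e. `V = (I − U_T)⁻¹ f`), and with `b = 1 + Kβ/(1−β)`,
`c = 1 − 1/b ∈ (0,1)` one has `‖x‖^p ≤ V(x) ≤ b‖x‖^p` and `[U_T V](x) ≤ c V(x)` on `X`. -/
theorem lyapunov_function_from_koopman_resolvent
    {d : ℕ} {Wsp : Type*} [MeasurableSpace Wsp]
    (X : Set (EuclideanSpace ℝ (Fin d))) (hX : IsCompact X)
    (v : Measure Wsp) [IsProbabilityMeasure v]
    (T : EuclideanSpace ℝ (Fin d) → Wsp → EuclideanSpace ℝ (Fin d))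
    (hT : Measurable (Function.uncurry T))
    (hTX : ∀ x ∈ X, ∀ y, T x y ∈ X)
    (p : ℕ) (hp : 0 < p)
    (K : ℝ) (hK : 0 < K) (β : ℝ) (hβ0 : 0 < β) (hβ1 : β < 1)
    (hstab : ∀ x ∈ X, ∀ n : ℕ, 1 ≤ n →
      (∫ w, ‖Tn T n x w‖ ^ p ∂(Measure.pi fun _ : Fin n => v)) ≤ K * β ^ n * ‖x‖ ^ p)
    (V : EuclideanSpace ℝ (Fin d) → ℝ)
    (hVdef : V = fun x =>
      ∑' k : ℕ, ∫ w, ‖Tn T k x w‖ ^ p ∂(Measure.pi fun _ : Fin k => v)) :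
    (0 < 1 - 1 / (1 + K * β / (1 - β)) ∧ 1 - 1 / (1 + K * β / (1 - β)) < 1) ∧
    ∀ x ∈ X,
      Summable (fun k : ℕ => ∫ w, ‖Tn T k x w‖ ^ p ∂(Measure.pi fun _ : Fin k => v)) ∧
      V x = ‖x‖ ^ p + ∫ y, V (T x y) ∂v ∧
      ‖x‖ ^ p ≤ V x ∧ V x ≤ (1 + K * β / (1 - β)) * ‖x‖ ^ p ∧
      (∫ y, V (T x y) ∂v) ≤ (1 - 1 / (1 + K * β / (1 - β))) * V x :=
  lyapunov_function_from_koopman_resolvent_general X hX v T hT hTX p K hK β hβ0 hβ1 hstab V hVdef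
end
end

section
/- In the finite-noise, finite-partition setting, assume each map T_ℓ is one-to-one and Borel measurable. Suppose there exists a finite Borel measure μ̄ on X₁ that is equivalent to Lebesgue measure m on X₁ (μ̄(B) = 0 iff m(B) = 0 for Borel B ⊆ X₁) and satisfies [P₁ μ̄](B) := Σ_{ℓ=1}^Q p_ℓ μ̄(T_ℓ^{-1}(B) ∩ X₁) < μ̄(B) for every Borel B ⊆ X₁ with m(B) > 0. Then the matrix P₁ is transient: P₁^n → 0 entrywise as n → ∞. -/
/-!
If `P₁` were not transient, the limsup of a non-vanishing row of `P₁ⁿ` would be a nonzero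
nonnegative row vector `v` with `v ≤ v P₁`; since `P₁` is substochastic, the support `s` of `v`
is then closed: every row indexed by `s` puts all of its mass on `s`. Unwinding the definition
of `P₁`, this says that for every cell `D_a ⊆ A := ⋃_{b ∈ s} D_b` and every noise value `ℓ`,
almost all of `D_a` is mapped by `T_ℓ` into `A`, i.e. `A ⊆ T_ℓ⁻¹(A)` up to a Lebesgue-null set.
As `μ̄` is absolutely continuous with respect to `m` on `X₁`, this gives `μ̄(A) ≤ [P₁ μ̄](A)`,
contradicting the strict Lyapunov inequality at `A`, which has positive Lebesgue measure.
-/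

open MeasureTheory Filter Set
open scoped Topology ENNReal

namespace Matrix

variable {n : Type*} [Fintype n]

structure IsSubstochastic (M : Matrix n n ℝ) : Prop where
  nonneg : ∀ i j, 0 ≤ M i j
  sum_row_le_one : ∀ i, ∑ j, M i j ≤ 1

def IsTransient [DecidableEq n] (M : Matrix n n ℝ) : Prop :=
  ∀ i j, Tendsto (fun k : ℕ => (M ^ k) i j) atTop (𝓝 0)

namespace IsSubstochastic

variable {M N : Matrix n n ℝ}

lemma one [DecidableEq n] : IsSubstochastic (1 : Matrix n n ℝ) where
  nonneg i j := by rw [one_apply]; split_ifs <;> norm_num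
  sum_row_le_one i := by simp [one_apply]

lemma mul (hM : M.IsSubstochastic) (hN : N.IsSubstochastic) : (M * N).IsSubstochastic where
  nonneg i j := Finset.sum_nonneg fun k _ => mul_nonneg (hM.nonneg i k) (hN.nonneg k j)
  sum_row_le_one i := calc
    ∑ j, (M * N) i j = ∑ k, M i k * ∑ j, N k j := by
      simp only [mul_apply, Finset.mul_sum]; exact Finset.sum_comm
    _ ≤ ∑ k, M i k := Finset.sum_le_sum fun k _ =>
      mul_le_of_le_one_right (hM.nonneg i k) (hN.sum_row_le_one k)
    _ ≤ 1 := hM.sum_row_le_one i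

lemma pow [DecidableEq n] (hM : M.IsSubstochastic) (k : ℕ) : (M ^ k).IsSubstochastic := by
  induction k with
  | zero => simpa using one
  | succ k ih => rw [pow_succ]; exact ih.mul hM

lemma apply_le_one (hM : M.IsSubstochastic) (i j : n) : M i j ≤ 1 :=
  (Finset.single_le_sum (fun k _ => hM.nonneg i k) (Finset.mem_univ j)).trans
    (hM.sum_row_le_one i)

lemma exists_subinvariant_of_not_tendsto_zero [DecidableEq n] (hM : M.IsSubstochastic)
    {i₀ j₀ : n} (h : ¬ Tendsto (fun k => (M ^ k) i₀ j₀) atTop (𝓝 0)) :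
    ∃ v : n → ℝ, (∀ j, 0 ≤ v j) ∧ 0 < v j₀ ∧ ∀ j, v j ≤ ∑ k, v k * M k j := by
  set v : n → ℝ := fun j => limsup (fun k => (M ^ k) i₀ j) atTop
  have hbdd (j : n) : IsBoundedUnder (· ≤ ·) atTop fun k => (M ^ k) i₀ j :=
    isBoundedUnder_of ⟨1, fun k => (hM.pow k).apply_le_one i₀ j⟩
  have hlt (ε : ℝ) (hε : 0 < ε) : ∀ᶠ k in atTop, ∀ j, (M ^ k) i₀ j < v j + ε :=
    eventually_all.2 fun j => eventually_lt_of_limsup_lt (lt_add_of_pos_right _ hε) (hbdd j)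
  refine ⟨v, fun j => ?_, ?_, fun j => ?_⟩
  · exact le_limsup_of_frequently_le (Frequently.of_forall fun k => (hM.pow k).nonneg i₀ j)
      (hbdd j)
  · by_contra! hv
    refine h (tendsto_order.2 ⟨fun a ha => Eventually.of_forall fun k =>
      ha.trans_le ((hM.pow k).nonneg i₀ j₀), fun a ha => ?_⟩)
    exact eventually_lt_of_limsup_lt (hv.trans_lt ha) (hbdd j₀)
  · have hε (ε : ℝ) (hε : 0 < ε) : v j ≤ ∑ k, (v k + ε) * M k j := by
      change limsup _ atTop ≤ _
      rw [← limsup_nat_add _ 1]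
      refine limsup_le_of_le (isCoboundedUnder_le_of_le _ fun k => (hM.pow _).nonneg i₀ j)
        ((hlt ε hε).mono fun k hk => ?_)
      rw [pow_succ, mul_apply]
      exact Finset.sum_le_sum fun l _ => mul_le_mul_of_nonneg_right (hk l).le (hM.nonneg l j)
    have hcont : Tendsto (fun ε => ∑ k, (v k + ε) * M k j) (𝓝[>] 0)
        (𝓝 (∑ k, (v k + 0) * M k j)) :=
      ((by fun_prop : Continuous fun ε => ∑ k, (v k + ε) * M k j).tendsto 0).mono_left
        nhdsWithin_le_nhds
    simpa using ge_of_tendsto hcont (eventually_nhdsWithin_of_forall hε)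

lemma sum_support_eq_one_of_subinvariant (hM : M.IsSubstochastic) {v : n → ℝ}
    (hv0 : ∀ j, 0 ≤ v j) (hv : ∀ j, v j ≤ ∑ k, v k * M k j) {a : n} (ha : 0 < v a) :
    ∑ b ∈ Finset.univ.filter (0 < v ·), M a b = 1 := by
  set s := Finset.univ.filter (0 < v ·)
  have hle (k : n) : v k * ∑ b ∈ s, M k b ≤ v k :=
    mul_le_of_le_one_right (hv0 k) ((Finset.sum_le_sum_of_subset_of_nonneg (s.subset_univ)
      fun b _ _ => hM.nonneg k b).trans (hM.sum_row_le_one k))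
  have hge : ∑ k, v k ≤ ∑ k, v k * ∑ b ∈ s, M k b := calc
    ∑ k, v k = ∑ b ∈ s, v b :=
      (Finset.sum_filter_of_ne fun b _ hb => (hv0 b).lt_of_ne' hb).symm
    _ ≤ ∑ b ∈ s, ∑ k, v k * M k b := Finset.sum_le_sum fun b _ => hv b
    _ = ∑ k, v k * ∑ b ∈ s, M k b := by simp only [Finset.mul_sum]; exact Finset.sum_comm
  have heq := (Finset.sum_eq_sum_iff_of_le fun k _ => hle k).1 ((hge.antisymm' <|
    Finset.sum_le_sum fun k _ => hle k)) a (Finset.mem_univ a)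
  exact (mul_eq_left₀ ha.ne').1 heq

theorem exists_closed_of_not_isTransient [DecidableEq n] (hM : M.IsSubstochastic)
    (h : ¬ M.IsTransient) : ∃ s : Finset n, s.Nonempty ∧ ∀ a ∈ s, ∑ b ∈ s, M a b = 1 := by
  simp only [IsTransient, not_forall] at h
  obtain ⟨i₀, j₀, hij⟩ := h
  obtain ⟨v, hv0, hvj₀, hv⟩ := hM.exists_subinvariant_of_not_tendsto_zero hij
  exact ⟨_, ⟨j₀, by simpa using hvj₀⟩, fun a ha =>
    hM.sum_support_eq_one_of_subinvariant hv0 hv (by simpa using ha)⟩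

end IsSubstochastic

end Matrix

lemma eq_of_le_of_sum_mul_eq {κ : Type*} [Fintype κ] {p x : κ → ℝ} {c : ℝ}
    (hp : ∀ ℓ, 0 < p ℓ) (hpsum : ∑ ℓ, p ℓ = 1) (hx : ∀ ℓ, x ℓ ≤ c)
    (h : ∑ ℓ, p ℓ * x ℓ = c) (ℓ : κ) : x ℓ = c := by
  have hle (ℓ : κ) : p ℓ * x ℓ ≤ p ℓ * c := mul_le_mul_of_nonneg_left (hx ℓ) (hp ℓ).le
  have hsum : ∑ ℓ, p ℓ * x ℓ = ∑ ℓ, p ℓ * c := by rw [h, ← Finset.sum_mul, hpsum, one_mul]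
  exact mul_left_cancel₀ (hp ℓ).ne'
    ((Finset.sum_eq_sum_iff_of_le fun ℓ _ => hle ℓ).1 hsum ℓ (Finset.mem_univ ℓ))

namespace MeasureTheory

variable {α : Type*} [MeasurableSpace α]

lemma measure_sdiff_eq_zero_of_toReal_div_eq_one {m : Measure α} {s t : Set α}
    (ht : MeasurableSet t) (hs : m s ≠ ∞) (h : (m (t ∩ s)).toReal / (m s).toReal = 1) :
    m (s \ t) = 0 := by
  have hs0 : (m s).toReal ≠ 0 := by rintro h0; simp [h0] at h
  have heq : m (s ∩ t) = m s := by
    rw [inter_comm]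
    exact (ENNReal.toReal_eq_toReal_iff' (measure_ne_top_of_subset inter_subset_right hs) hs).1
      ((div_eq_one_iff_eq hs0).1 h)
  have hadd := measure_inter_add_sdiff (μ := m) s ht
  rw [heq] at hadd
  exact (ENNReal.add_right_inj hs).1 (hadd.trans (add_zero _).symm)

lemma measure_le_sum_measure_preimage_inter {κ : Type*} [Fintype κ] {μ : Measure α}
    {p : κ → ℝ} (hp : ∀ ℓ, 0 ≤ p ℓ) (hpsum : ∑ ℓ, p ℓ = 1) {T : κ → α → α} {A Y : Set α}
    (hAY : A ⊆ Y) (hA : ∀ ℓ, μ (A \ T ℓ ⁻¹' A) = 0) :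
    μ A ≤ ∑ ℓ, ENNReal.ofReal (p ℓ) * μ (T ℓ ⁻¹' A ∩ Y) := calc
  μ A = ∑ ℓ, ENNReal.ofReal (p ℓ) * μ A := by
    rw [← Finset.sum_mul, ← ENNReal.ofReal_sum_of_nonneg fun ℓ _ => hp ℓ, hpsum,
      ENNReal.ofReal_one, one_mul]
  _ ≤ ∑ ℓ, ENNReal.ofReal (p ℓ) * μ (T ℓ ⁻¹' A ∩ Y) := by
    refine Finset.sum_le_sum fun ℓ _ => mul_le_mul_right (measure_mono_ae (ae_le_set.2 ?_)) _
    refine measure_mono_null (fun x hx => ?_) (hA ℓ)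
    exact ⟨hx.1, fun h => hx.2 ⟨h, hAY hx.1⟩⟩

section CellMatrix

variable {ι κ : Type*} [Fintype κ] {m : Measure α} {p : κ → ℝ} {T : κ → α → α}
  {D : ι → Set α} {P : Matrix ι ι ℝ}

lemma sum_row_eq_preimage_biUnion (hT : ∀ ℓ, Measurable (T ℓ)) (hDmeas : ∀ i, MeasurableSet (D i))
    (hDdisj : Pairwise fun i j => Disjoint (D i) (D j)) (hDfin : ∀ i, m (D i) ≠ ∞)
    (hP : ∀ i j, P i j = ∑ ℓ, p ℓ * ((m (T ℓ ⁻¹' D j ∩ D i)).toReal / (m (D i)).toReal))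
    (a : ι) (s : Finset ι) :
    ∑ b ∈ s, P a b =
      ∑ ℓ, p ℓ * ((m (T ℓ ⁻¹' (⋃ b ∈ s, D b) ∩ D a)).toReal / (m (D a)).toReal) := by
  have hcell (ℓ : κ) : m (T ℓ ⁻¹' (⋃ b ∈ s, D b) ∩ D a) = ∑ b ∈ s, m (T ℓ ⁻¹' D b ∩ D a) := by
    rw [preimage_iUnion₂, iUnion₂_inter]
    exact measure_biUnion_finset
      (fun b _ c _ hbc => ((hDdisj hbc).preimage _).mono inter_subset_left inter_subset_left)
      fun b _ => (hT ℓ (hDmeas b)).inter (hDmeas a)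
  simp_rw [hcell, hP]
  rw [Finset.sum_comm]
  refine Finset.sum_congr rfl fun ℓ _ => ?_
  rw [ENNReal.toReal_sum fun b _ => measure_ne_top_of_subset inter_subset_right (hDfin a),
    Finset.sum_div, Finset.mul_sum]

lemma toReal_measure_inter_div_le_one (s t : Set α) :
    (m (t ∩ s)).toReal / (m s).toReal ≤ 1 := by
  rcases eq_or_ne (m s) ∞ with hs | hs
  · simp [hs]
  · exact div_le_one_of_le₀ (ENNReal.toReal_mono hs (measure_mono inter_subset_right))
      ENNReal.toReal_nonneg

lemma isSubstochastic_of_transition [Fintype ι] (hp : ∀ ℓ, 0 ≤ p ℓ) (hpsum : ∑ ℓ, p ℓ = 1)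
    (hT : ∀ ℓ, Measurable (T ℓ)) (hDmeas : ∀ i, MeasurableSet (D i))
    (hDdisj : Pairwise fun i j => Disjoint (D i) (D j)) (hDfin : ∀ i, m (D i) ≠ ∞)
    (hP : ∀ i j, P i j = ∑ ℓ, p ℓ * ((m (T ℓ ⁻¹' D j ∩ D i)).toReal / (m (D i)).toReal)) :
    P.IsSubstochastic where
  nonneg i j := by rw [hP]; exact Finset.sum_nonneg fun ℓ _ => mul_nonneg (hp ℓ) (by positivity)
  sum_row_le_one a := by
    rw [sum_row_eq_preimage_biUnion hT hDmeas hDdisj hDfin hP, ← hpsum]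
    exact Finset.sum_le_sum fun ℓ _ =>
      mul_le_of_le_one_right (hp ℓ) (toReal_measure_inter_div_le_one _ _)

lemma measure_sdiff_preimage_eq_zero_of_closed (hp : ∀ ℓ, 0 < p ℓ) (hpsum : ∑ ℓ, p ℓ = 1)
    (hT : ∀ ℓ, Measurable (T ℓ)) (hDmeas : ∀ i, MeasurableSet (D i))
    (hDdisj : Pairwise fun i j => Disjoint (D i) (D j)) (hDfin : ∀ i, m (D i) ≠ ∞)
    (hP : ∀ i j, P i j = ∑ ℓ, p ℓ * ((m (T ℓ ⁻¹' D j ∩ D i)).toReal / (m (D i)).toReal))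
    {s : Finset ι} (hs : ∀ a ∈ s, ∑ b ∈ s, P a b = 1) (ℓ : κ) :
    m ((⋃ b ∈ s, D b) \ T ℓ ⁻¹' ⋃ b ∈ s, D b) = 0 := by
  have hAmeas : MeasurableSet (⋃ b ∈ s, D b) := s.measurableSet_biUnion fun b _ => hDmeas b
  simp_rw [iUnion_sdiff]
  refine (measure_biUnion_null_iff (I := (s : Set ι)) s.countable_toSet).2 fun a ha => ?_
  have hsum : ∑ ℓ, p ℓ * ((m (T ℓ ⁻¹' (⋃ b ∈ s, D b) ∩ D a)).toReal / (m (D a)).toReal) = 1 := by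
    rw [← sum_row_eq_preimage_biUnion hT hDmeas hDdisj hDfin hP, hs a ha]
  exact measure_sdiff_eq_zero_of_toReal_div_eq_one (hT ℓ hAmeas) (hDfin a)
    (eq_of_le_of_sum_mul_eq hp hpsum (fun _ => toReal_measure_inter_div_le_one _ _) hsum ℓ)

end CellMatrix

end MeasureTheory

theorem matrix_transient_of_lyapunov_measure_general
    {d : ℕ} (X : Set (EuclideanSpace ℝ (Fin d)))
    (Q L : ℕ)
    -- the finitely many noise values, with probabilities `p ℓ`
    (p : Fin Q → ℝ) (hp : ∀ ℓ, 0 < p ℓ) (hpsum : ∑ ℓ, p ℓ = 1)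
    (Tl : Fin Q → EuclideanSpace ℝ (Fin d) → EuclideanSpace ℝ (Fin d))
    (hTmeas : ∀ ℓ, Measurable (Tl ℓ))
    -- the partition `{D_2,…,D_L}` of `X₁ = X \ X₀`
    (X₀ : Set (EuclideanSpace ℝ (Fin d)))
    (D : Fin L → Set (EuclideanSpace ℝ (Fin d)))
    (hDmeas : ∀ i, MeasurableSet (D i))
    (hDdisj : Pairwise fun i j => Disjoint (D i) (D j))
    (hDpos : ∀ i, 0 < volume (D i)) (hDfin : ∀ i, volume (D i) < ⊤)
    (hDunion : (⋃ i, D i) = X \ X₀)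
    -- the sub-Markov matrix `P₁`
    (P₁ : Matrix (Fin L) (Fin L) ℝ)
    (hP₁ : ∀ i j, P₁ i j =
      ∑ ℓ, p ℓ * ((volume ((Tl ℓ) ⁻¹' (D j) ∩ D i)).toReal / (volume (D i)).toReal))
    -- the Lyapunov measure `μ̄`, equivalent to Lebesgue measure on `X₁`
    (μbar : Measure (EuclideanSpace ℝ (Fin d)))
    (hequiv : ∀ B : Set (EuclideanSpace ℝ (Fin d)), MeasurableSet B → B ⊆ X \ X₀ →
      (μbar B = 0 ↔ volume B = 0))
    (hlyap : ∀ B : Set (EuclideanSpace ℝ (Fin d)), MeasurableSet B → B ⊆ X \ X₀ →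
      0 < volume B →
      ∑ ℓ, ENNReal.ofReal (p ℓ) * μbar ((Tl ℓ) ⁻¹' B ∩ (X \ X₀)) < μbar B) :
    ∀ i j, Tendsto (fun n => (P₁ ^ n) i j) atTop (nhds (0 : ℝ)) := by
  have hDfin_ne (i : Fin L) : volume (D i) ≠ ∞ := (hDfin i).ne
  have hP : P₁.IsSubstochastic := isSubstochastic_of_transition (fun ℓ => (hp ℓ).le) hpsum
    hTmeas hDmeas hDdisj hDfin_ne hP₁
  by_contra htrans
  obtain ⟨s, ⟨b₀, hb₀⟩, hclosed⟩ := hP.exists_closed_of_not_isTransient htrans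
  set A := ⋃ b ∈ s, D b
  have hAmeas : MeasurableSet A := s.measurableSet_biUnion fun b _ => hDmeas b
  have hAsub : A ⊆ X \ X₀ := hDunion ▸ iUnion₂_subset fun b _ => subset_iUnion D b
  have hApos : 0 < volume A := (hDpos b₀).trans_le (measure_mono (subset_biUnion_of_mem hb₀))
  have hinv (ℓ : Fin Q) : μbar (A \ Tl ℓ ⁻¹' A) = 0 :=
    (hequiv _ (hAmeas.diff (hTmeas ℓ hAmeas)) (sdiff_subset.trans hAsub)).2
      (measure_sdiff_preimage_eq_zero_of_closed hp hpsum hTmeas hDmeas hDdisj hDfin_ne hP₁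
        hclosed ℓ)
  exact (hlyap A hAmeas hAsub hApos).not_ge
    (measure_le_sum_measure_preimage_inter (fun ℓ => (hp ℓ).le) hpsum hAsub hinv)

/-- finite-noise, finite-partition setting. If there is a finite measure `μ̄`
on `X₁`, equivalent to Lebesgue measure on `X₁`, with
`[P₁ μ̄](B) = Σ_ℓ p_ℓ μ̄(T_ℓ⁻¹(B) ∩ X₁) < μ̄(B)` for every Borel `B ⊆ X₁` with `m(B) > 0`,
then the sub-Markov matrix `P₁` is transient: `P₁ⁿ → 0` entrywise. -/
theorem matrix_transient_of_lyapunov_measure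
    {d : ℕ} (X : Set (EuclideanSpace ℝ (Fin d))) (hX : IsCompact X)
    (Q L : ℕ)
    -- the finitely many noise values, with probabilities `p ℓ`
    (p : Fin Q → ℝ) (hp : ∀ ℓ, 0 < p ℓ) (hpsum : ∑ ℓ, p ℓ = 1)
    (Tl : Fin Q → EuclideanSpace ℝ (Fin d) → EuclideanSpace ℝ (Fin d))
    (hTmeas : ∀ ℓ, Measurable (Tl ℓ))
    (hTmaps : ∀ ℓ, MapsTo (Tl ℓ) X X)
    (hTinj : ∀ ℓ, InjOn (Tl ℓ) X)
    -- the partition `{D_2,…,D_L}` of `X₁ = X \ X₀`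
    (X₀ : Set (EuclideanSpace ℝ (Fin d))) (hX₀ : X₀ ⊆ X)
    (D : Fin L → Set (EuclideanSpace ℝ (Fin d)))
    (hDmeas : ∀ i, MeasurableSet (D i))
    (hDdisj : Pairwise fun i j => Disjoint (D i) (D j))
    (hDpos : ∀ i, 0 < volume (D i)) (hDfin : ∀ i, volume (D i) < ⊤)
    (hDunion : (⋃ i, D i) = X \ X₀)
    -- the sub-Markov matrix `P₁`
    (P₁ : Matrix (Fin L) (Fin L) ℝ)
    (hP₁ : ∀ i j, P₁ i j =
      ∑ ℓ, p ℓ * ((volume ((Tl ℓ) ⁻¹' (D j) ∩ D i)).toReal / (volume (D i)).toReal))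
    -- the Lyapunov measure `μ̄`, equivalent to Lebesgue measure on `X₁`
    (μbar : Measure (EuclideanSpace ℝ (Fin d))) [IsFiniteMeasure μbar]
    (hequiv : ∀ B : Set (EuclideanSpace ℝ (Fin d)), MeasurableSet B → B ⊆ X \ X₀ →
      (μbar B = 0 ↔ volume B = 0))
    (hlyap : ∀ B : Set (EuclideanSpace ℝ (Fin d)), MeasurableSet B → B ⊆ X \ X₀ →
      0 < volume B →
      ∑ ℓ, ENNReal.ofReal (p ℓ) * μbar ((Tl ℓ) ⁻¹' B ∩ (X \ X₀)) < μbar B) :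
    ∀ i j, Tendsto (fun n => (P₁ ^ n) i j) atTop (nhds (0 : ℝ)) :=
  matrix_transient_of_lyapunov_measure_general X Q L p hp hpsum Tl hTmeas X₀ D hDmeas hDdisj hDpos
    hDfin hDunion P₁ hP₁ μbar hequiv hlyap
end

section
/- In the finite-noise, finite-partition setting, suppose the matrix P₁ is transient (P₁^n → 0 entrywise as n → ∞). Then the equilibrium is coarse stable with respect to initial conditions in X₁: there is no nonempty subcollection {D_{s_1},…,D_{s_l}} of partition cells whose union S = D_{s_1} ∪ … ∪ D_{s_l} ⊆ X₁ satisfies T_ℓ(S) ⊆ S for every ℓ = 1,…,Q (equivalently, Prob{T(x,ξ) ∈ S} = Σ_ℓ p_ℓ χ_S(T_ℓ(x)) = 1 for every x ∈ S). Equivalently, if such an invariant union of cells S exists, then P₁ restricted to the corresponding indices is row-stochastic and hence admits an invariant probability vector, so P₁ is not transient. -/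
open MeasureTheory Filter Metric Set

noncomputable section

/-- finite-noise, finite-partition setting. If the sub-Markov matrix `P₁` is
transient (`P₁ⁿ → 0` entrywise), then the equilibrium is coarse stable with respect to
initial conditions in `X₁`: there is no nonempty subcollection of partition cells whose
union `S ⊆ X₁` satisfies `T_ℓ(S) ⊆ S` for every `ℓ` (equivalently,
`Prob{T(x,ξ) ∈ S} = 1` for every `x ∈ S`). -/
theorem coarse_stable_of_matrix_transient
    {d : ℕ} (X : Set (EuclideanSpace ℝ (Fin d))) (hX : IsCompact X)
    (Q L : ℕ)
    -- the finitely many noise values, with probabilities `p ℓ`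
    (p : Fin Q → ℝ) (hp : ∀ ℓ, 0 < p ℓ) (hpsum : ∑ ℓ, p ℓ = 1)
    (Tl : Fin Q → EuclideanSpace ℝ (Fin d) → EuclideanSpace ℝ (Fin d))
    (hTmeas : ∀ ℓ, Measurable (Tl ℓ))
    (hTmaps : ∀ ℓ, MapsTo (Tl ℓ) X X)
    -- the partition `{D_2,…,D_L}` of `X₁ = X \ X₀`
    (X₀ : Set (EuclideanSpace ℝ (Fin d))) (hX₀ : X₀ ⊆ X)
    (D : Fin L → Set (EuclideanSpace ℝ (Fin d)))
    (hDmeas : ∀ i, MeasurableSet (D i))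
    (hDdisj : Pairwise fun i j => Disjoint (D i) (D j))
    (hDpos : ∀ i, 0 < volume (D i)) (hDfin : ∀ i, volume (D i) < ⊤)
    (hDunion : (⋃ i, D i) = X \ X₀)
    -- the sub-Markov matrix `P₁`
    (P₁ : Matrix (Fin L) (Fin L) ℝ)
    (hP₁ : ∀ i j, P₁ i j =
      ∑ ℓ, p ℓ * ((volume ((Tl ℓ) ⁻¹' (D j) ∩ D i)).toReal / (volume (D i)).toReal))
    -- `P₁` is transient
    (htrans : ∀ i j, Tendsto (fun n => (P₁ ^ n) i j) atTop (nhds (0 : ℝ))) :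
    ¬ ∃ I : Finset (Fin L), I.Nonempty ∧
        ∀ ℓ : Fin Q, ∀ x ∈ ⋃ i ∈ I, D i, Tl ℓ x ∈ ⋃ i ∈ I, D i := by
  rintro ⟨I, ⟨i₀, hi₀⟩, hinv⟩
  -- entries of P₁ vanish from I to the complement of I
  have hzero : ∀ i ∈ I, ∀ j ∉ I, P₁ i j = 0 := by
    intro i hi j hj
    rw [hP₁]
    apply Finset.sum_eq_zero
    intro ℓ _
    have hempty : (Tl ℓ) ⁻¹' (D j) ∩ D i = ∅ := by
      ext x
      simp only [mem_inter_iff, mem_preimage, mem_empty_iff_false, iff_false, not_and]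
      intro hxj hxi
      have hxS : Tl ℓ x ∈ ⋃ i ∈ I, D i := hinv ℓ x (mem_biUnion hi hxi)
      obtain ⟨k, hk, hxk⟩ : ∃ k ∈ I, Tl ℓ x ∈ D k := by
        simpa [mem_iUnion] using hxS
      have hkj : k ≠ j := fun h => hj (h ▸ hk)
      exact (hDdisj hkj).ne_of_mem hxk hxj rfl
    rw [hempty]
    simp
  -- rows of P₁ restricted to I sum to 1
  have hrow : ∀ i ∈ I, ∑ j ∈ I, P₁ i j = 1 := by
    intro i hi
    have hfin : (volume (D i)).toReal ≠ 0 :=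
      (ENNReal.toReal_pos (hDpos i).ne' (hDfin i).ne).ne'
    have key : ∀ ℓ : Fin Q,
        ∑ j ∈ I, (volume ((Tl ℓ) ⁻¹' (D j) ∩ D i)).toReal = (volume (D i)).toReal := by
      intro ℓ
      have hmeas : ∀ j ∈ I, MeasurableSet ((Tl ℓ) ⁻¹' (D j) ∩ D i) :=
        fun j _ => ((hTmeas ℓ) (hDmeas j)).inter (hDmeas i)
      have hdisj : (I : Set (Fin L)).PairwiseDisjoint
          fun j => (Tl ℓ) ⁻¹' (D j) ∩ D i := by
        intro a _ b _ hab
        exact Disjoint.mono (inter_subset_left.trans (preimage_mono subset_rfl))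
          inter_subset_left (Disjoint.preimage (Tl ℓ) (hDdisj hab))
      have hsum : ∑ j ∈ I, volume ((Tl ℓ) ⁻¹' (D j) ∩ D i)
          = volume (⋃ j ∈ I, ((Tl ℓ) ⁻¹' (D j) ∩ D i)) :=
        (measure_biUnion_finset hdisj hmeas).symm
      have hset : (⋃ j ∈ I, ((Tl ℓ) ⁻¹' (D j) ∩ D i)) = D i := by
        apply Subset.antisymm
        · intro x hx
          obtain ⟨j, _, _, hxi⟩ : ∃ j, Tl ℓ x ∈ D j ∧ j ∈ I ∧ x ∈ D i := by
            simpa [mem_iUnion, mem_inter_iff] using hx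
          exact hxi
        · intro x hx
          have hxS : Tl ℓ x ∈ ⋃ i ∈ I, D i := hinv ℓ x (mem_biUnion hi hx)
          obtain ⟨k, hk, hxk⟩ : ∃ k ∈ I, Tl ℓ x ∈ D k := by
            simpa [mem_iUnion] using hxS
          exact mem_biUnion hk ⟨hxk, hx⟩
      have htop : ∀ j ∈ I, volume ((Tl ℓ) ⁻¹' (D j) ∩ D i) ≠ ⊤ :=
        fun j _ => ((measure_mono inter_subset_right).trans_lt (hDfin i)).ne
      rw [← ENNReal.toReal_sum htop, hsum, hset]
    calc ∑ j ∈ I, P₁ i j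
        = ∑ ℓ, p ℓ * ((∑ j ∈ I, (volume ((Tl ℓ) ⁻¹' (D j) ∩ D i)).toReal)
            / (volume (D i)).toReal) := by
          simp only [hP₁]
          rw [Finset.sum_comm]
          congr 1
          ext ℓ
          rw [Finset.sum_div, Finset.mul_sum]
      _ = ∑ ℓ, p ℓ := by
          congr 1; ext ℓ
          rw [key ℓ, div_self hfin, mul_one]
      _ = 1 := hpsum
  -- by induction, P₁ⁿ has row sums 1 on I and vanishes off I
  have hmain : ∀ n : ℕ,
      (∀ j ∉ I, (P₁ ^ n) i₀ j = 0) ∧ ∑ j ∈ I, (P₁ ^ n) i₀ j = 1 := by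
    intro n
    induction n with
    | zero =>
      constructor
      · intro j hj
        simp only [pow_zero, Matrix.one_apply]
        exact if_neg (fun h : i₀ = j => hj (h ▸ hi₀))
      · simp only [pow_zero, Matrix.one_apply]
        rw [Finset.sum_ite_eq I i₀ (fun _ => (1 : ℝ))]
        simp [hi₀]
    | succ n ih =>
      obtain ⟨ih0, ih1⟩ := ih
      have happ : ∀ j, (P₁ ^ (n + 1)) i₀ j = ∑ k, (P₁ ^ n) i₀ k * P₁ k j := by
        intro j; rw [pow_succ, Matrix.mul_apply]
      constructor
      · intro j hj
        rw [happ]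
        apply Finset.sum_eq_zero
        intro k _
        by_cases hk : k ∈ I
        · rw [hzero k hk j hj, mul_zero]
        · rw [ih0 k hk, zero_mul]
      · calc ∑ j ∈ I, (P₁ ^ (n + 1)) i₀ j
            = ∑ j ∈ I, ∑ k, (P₁ ^ n) i₀ k * P₁ k j := by
              simp only [happ]
          _ = ∑ k, ∑ j ∈ I, (P₁ ^ n) i₀ k * P₁ k j := Finset.sum_comm
          _ = ∑ k, (P₁ ^ n) i₀ k * ∑ j ∈ I, P₁ k j := by
              simp [Finset.mul_sum]
          _ = ∑ k ∈ I, (P₁ ^ n) i₀ k * ∑ j ∈ I, P₁ k j := by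
              rw [← Finset.sum_subset (Finset.subset_univ I)]
              intro k _ hk
              rw [ih0 k hk, zero_mul]
          _ = ∑ k ∈ I, (P₁ ^ n) i₀ k := by
              apply Finset.sum_congr rfl
              intro k hk
              rw [hrow k hk, mul_one]
          _ = 1 := ih1
  -- contradiction with transience
  have h0 : Tendsto (fun n => ∑ j ∈ I, (P₁ ^ n) i₀ j) atTop (nhds 0) := by
    have := tendsto_finset_sum I (fun j _ => htrans i₀ j)
    simpa using this
  have h1 : Tendsto (fun n => ∑ j ∈ I, (P₁ ^ n) i₀ j) atTop (nhds 1) := by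
    simp only [fun n => (hmain n).2]
    exact tendsto_const_nhds
  exact one_ne_zero (tendsto_nhds_unique h1 h0)
end
end

section
/- In the finite-noise, finite-partition setting with each T_ℓ one-to-one, suppose ν is a probability vector (ν_i ≥ 0, Σ_i ν_i = 1) satisfying ν P₁ = ν. Let S be the union of those cells D_i with ν_i > 0, and for each ℓ = 1,…,Q let S_ℓ = {x ∈ S : T_ℓ(x) ∈ S}. Then m(S_ℓ) = m(S) for every ℓ = 1,…,Q; equivalently, Σ_{ℓ=1}^Q p_ℓ m(T_ℓ^{-1}(S) ∩ S) = m(S). -/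
open MeasureTheory Filter Metric Set

noncomputable section

/-- finite-noise, finite-partition setting with each `T_ℓ` one-to-one. If
`ν` is a probability vector with `ν P₁ = ν`, `S` is the union of the cells `D_i` with
`ν_i > 0`, and `S_ℓ = {x ∈ S : T_ℓ(x) ∈ S}`, then `m(S_ℓ) = m(S)` for every `ℓ`;
equivalently, `Σ_ℓ p_ℓ m(T_ℓ⁻¹(S) ∩ S) = m(S)`. -/
theorem invariant_vector_gives_invariant_set
    {d : ℕ} (X : Set (EuclideanSpace ℝ (Fin d))) (hX : IsCompact X)
    (Q L : ℕ)
    -- the finitely many noise values, with probabilities `p ℓ`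
    (p : Fin Q → ℝ) (hp : ∀ ℓ, 0 < p ℓ) (hpsum : ∑ ℓ, p ℓ = 1)
    (Tl : Fin Q → EuclideanSpace ℝ (Fin d) → EuclideanSpace ℝ (Fin d))
    (hTmeas : ∀ ℓ, Measurable (Tl ℓ))
    (hTmaps : ∀ ℓ, MapsTo (Tl ℓ) X X)
    (hTinj : ∀ ℓ, InjOn (Tl ℓ) X)
    -- the partition cells `{D_2,…,D_L}`, with union `X₁ ⊆ X`
    (D : Fin L → Set (EuclideanSpace ℝ (Fin d)))
    (hDmeas : ∀ i, MeasurableSet (D i))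
    (hDX : ∀ i, D i ⊆ X)
    (hDdisj : Pairwise fun i j => Disjoint (D i) (D j))
    (hDpos : ∀ i, 0 < volume (D i)) (hDfin : ∀ i, volume (D i) < ⊤)
    -- the sub-Markov matrix `P₁`
    (P₁ : Matrix (Fin L) (Fin L) ℝ)
    (hP₁ : ∀ i j, P₁ i j =
      ∑ ℓ, p ℓ * ((volume ((Tl ℓ) ⁻¹' (D j) ∩ D i)).toReal / (volume (D i)).toReal))
    -- the invariant probability vector `ν`
    (ν : Fin L → ℝ) (hνnn : ∀ i, 0 ≤ ν i) (hνsum : ∑ i, ν i = 1)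
    (hνinv : Matrix.vecMul ν P₁ = ν) :
    (∀ ℓ : Fin Q,
        volume ((⋃ i ∈ {i : Fin L | 0 < ν i}, D i) ∩
            (Tl ℓ) ⁻¹' (⋃ i ∈ {i : Fin L | 0 < ν i}, D i))
          = volume (⋃ i ∈ {i : Fin L | 0 < ν i}, D i)) ∧
    ∑ ℓ, ENNReal.ofReal (p ℓ) *
        volume ((Tl ℓ) ⁻¹' (⋃ i ∈ {i : Fin L | 0 < ν i}, D i) ∩
          (⋃ i ∈ {i : Fin L | 0 < ν i}, D i))
      = volume (⋃ i ∈ {i : Fin L | 0 < ν i}, D i) := by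
  classical
  set S : Set (EuclideanSpace ℝ (Fin d)) := ⋃ i ∈ {i : Fin L | 0 < ν i}, D i with hSdef
  set F : Finset (Fin L) := Finset.univ.filter (fun i => 0 < ν i) with hFdef
  have hmemF : ∀ i, i ∈ F ↔ 0 < ν i := by
    intro i; simp [hFdef]
  have hSF : S = ⋃ i ∈ F, D i := by
    ext x; simp [hSdef, hFdef]
  have hSmeas : MeasurableSet S := by
    rw [hSF]; exact F.measurableSet_biUnion (fun i _ => hDmeas i)
  -- finiteness
  have hDne : ∀ i, volume (D i) ≠ ⊤ := fun i => (hDfin i).ne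
  have hEfin : ∀ (E : Set (EuclideanSpace ℝ (Fin d))) i, volume (E ∩ D i) ≠ ⊤ :=
    fun E i => (lt_of_le_of_lt (measure_mono inter_subset_right) (hDfin i)).ne
  have hDtpos : ∀ i, 0 < (volume (D i)).toReal :=
    fun i => ENNReal.toReal_pos (hDpos i).ne' (hDne i)
  -- decomposition of volume (Tl ℓ ⁻¹' S ∩ D i)
  have key1 : ∀ (ℓ : Fin Q) (i : Fin L),
      volume (Tl ℓ ⁻¹' S ∩ D i) = ∑ j ∈ F, volume (Tl ℓ ⁻¹' (D j) ∩ D i) := by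
    intro ℓ i
    have hset : Tl ℓ ⁻¹' S ∩ D i = ⋃ j ∈ F, (Tl ℓ ⁻¹' (D j) ∩ D i) := by
      rw [hSF]; ext x
      simp only [mem_inter_iff, mem_preimage, mem_iUnion, exists_prop]
      tauto
    rw [hset]
    refine measure_biUnion_finset ?_ ?_
    · intro j hj k hk hjk
      exact ((hDdisj hjk).preimage (Tl ℓ)).mono inter_subset_left inter_subset_left
    · exact fun j _ => ((hDmeas j).preimage (hTmeas ℓ)).inter (hDmeas i)
  have key1' : ∀ (ℓ : Fin Q) (i : Fin L),
      (volume (Tl ℓ ⁻¹' S ∩ D i)).toReal = ∑ j ∈ F, (volume (Tl ℓ ⁻¹' (D j) ∩ D i)).toReal := by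
    intro ℓ i
    rw [key1 ℓ i]
    exact ENNReal.toReal_sum (fun j _ => hEfin _ i)
  have hle : ∀ (ℓ : Fin Q) (i : Fin L),
      (volume (Tl ℓ ⁻¹' S ∩ D i)).toReal ≤ (volume (D i)).toReal := by
    intro ℓ i
    exact ENNReal.toReal_mono (hDne i) (measure_mono inter_subset_right)
  -- row sums over F
  have hrow : ∀ i : Fin L, ∑ j ∈ F, P₁ i j
      = ∑ ℓ, p ℓ * ((volume (Tl ℓ ⁻¹' S ∩ D i)).toReal / (volume (D i)).toReal) := by
    intro i
    calc ∑ j ∈ F, P₁ i j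
        = ∑ j ∈ F, ∑ ℓ, p ℓ * ((volume ((Tl ℓ) ⁻¹' (D j) ∩ D i)).toReal / (volume (D i)).toReal) := by
          exact Finset.sum_congr rfl (fun j _ => hP₁ i j)
      _ = ∑ ℓ, ∑ j ∈ F, p ℓ * ((volume ((Tl ℓ) ⁻¹' (D j) ∩ D i)).toReal / (volume (D i)).toReal) :=
          Finset.sum_comm
      _ = ∑ ℓ, p ℓ * ((volume (Tl ℓ ⁻¹' S ∩ D i)).toReal / (volume (D i)).toReal) := by
          refine Finset.sum_congr rfl (fun ℓ _ => ?_)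
          rw [key1' ℓ i, Finset.sum_div, Finset.mul_sum]
  have hrow_le : ∀ i : Fin L, ∑ j ∈ F, P₁ i j ≤ 1 := by
    intro i
    rw [hrow i, ← hpsum]
    refine Finset.sum_le_sum (fun ℓ _ => ?_)
    have : (volume (Tl ℓ ⁻¹' S ∩ D i)).toReal / (volume (D i)).toReal ≤ 1 :=
      (div_le_one (hDtpos i)).mpr (hle ℓ i)
    nlinarith [hp ℓ, this]
  -- ν restricted to F sums to 1
  have hνzero : ∀ i, i ∉ F → ν i = 0 := by
    intro i hi
    have := (hmemF i).not.mp hi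
    exact le_antisymm (not_lt.mp this) (hνnn i)
  have hνFsum : ∑ j ∈ F, ν j = 1 := by
    rw [← hνsum]
    exact Finset.sum_subset F.subset_univ (fun x _ hx => hνzero x hx)
  -- invariance gives sum identity
  have hinv : ∀ j, ∑ i, ν i * P₁ i j = ν j := by
    intro j
    have := congrFun hνinv j
    simpa [Matrix.vecMul, dotProduct] using this
  have hkey : ∑ i, ν i * (∑ j ∈ F, P₁ i j) = 1 := by
    calc ∑ i, ν i * (∑ j ∈ F, P₁ i j)
        = ∑ i, ∑ j ∈ F, ν i * P₁ i j := by
          exact Finset.sum_congr rfl (fun i _ => Finset.mul_sum _ _ _)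
      _ = ∑ j ∈ F, ∑ i, ν i * P₁ i j := Finset.sum_comm
      _ = ∑ j ∈ F, ν j := Finset.sum_congr rfl (fun j _ => hinv j)
      _ = 1 := hνFsum
  -- each i with ν i > 0 has full row sum
  have hrone : ∀ i ∈ F, ∑ j ∈ F, P₁ i j = 1 := by
    intro i hi
    have hsum0 : ∑ i, ν i * (1 - ∑ j ∈ F, P₁ i j) = 0 := by
      have : ∑ i, ν i * (1 - ∑ j ∈ F, P₁ i j)
          = ∑ i, ν i - ∑ i, ν i * (∑ j ∈ F, P₁ i j) := by
        rw [← Finset.sum_sub_distrib]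
        exact Finset.sum_congr rfl (fun i _ => by ring)
      rw [this, hνsum, hkey]; ring
    have hnn : ∀ i ∈ Finset.univ, 0 ≤ ν i * (1 - ∑ j ∈ F, P₁ i j) := by
      intro i _
      exact mul_nonneg (hνnn i) (by linarith [hrow_le i])
    have := (Finset.sum_eq_zero_iff_of_nonneg hnn).mp hsum0 i (Finset.mem_univ i)
    have hνi : 0 < ν i := (hmemF i).mp hi
    have : (1 : ℝ) - ∑ j ∈ F, P₁ i j = 0 := by
      rcases mul_eq_zero.mp this with h | h
      · exact absurd h hνi.ne'
      · exact h
    linarith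
  -- for i ∈ F and every ℓ, volume (Tl ℓ ⁻¹' S ∩ D i) = volume (D i)
  have hfull : ∀ i ∈ F, ∀ ℓ : Fin Q, volume (Tl ℓ ⁻¹' S ∩ D i) = volume (D i) := by
    intro i hi ℓ
    have h1 : ∑ ℓ, p ℓ * ((volume (Tl ℓ ⁻¹' S ∩ D i)).toReal / (volume (D i)).toReal) = 1 := by
      rw [← hrow i]; exact hrone i hi
    have hsum0 : ∑ ℓ, p ℓ * (1 - (volume (Tl ℓ ⁻¹' S ∩ D i)).toReal / (volume (D i)).toReal) = 0 := by
      have : ∑ ℓ, p ℓ * (1 - (volume (Tl ℓ ⁻¹' S ∩ D i)).toReal / (volume (D i)).toReal)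
          = ∑ ℓ, p ℓ - ∑ ℓ, p ℓ * ((volume (Tl ℓ ⁻¹' S ∩ D i)).toReal / (volume (D i)).toReal) := by
        rw [← Finset.sum_sub_distrib]
        exact Finset.sum_congr rfl (fun ℓ _ => by ring)
      rw [this, hpsum, h1]; ring
    have hnn : ∀ ℓ ∈ Finset.univ, 0 ≤ p ℓ * (1 - (volume (Tl ℓ ⁻¹' S ∩ D i)).toReal / (volume (D i)).toReal) := by
      intro ℓ _
      have := (div_le_one (hDtpos i)).mpr (hle ℓ i)
      exact mul_nonneg (hp ℓ).le (by linarith)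
    have hz := (Finset.sum_eq_zero_iff_of_nonneg hnn).mp hsum0 ℓ (Finset.mem_univ ℓ)
    have hratio : (volume (Tl ℓ ⁻¹' S ∩ D i)).toReal / (volume (D i)).toReal = 1 := by
      rcases mul_eq_zero.mp hz with h | h
      · exact absurd h (hp ℓ).ne'
      · linarith
    have htr : (volume (Tl ℓ ⁻¹' S ∩ D i)).toReal = (volume (D i)).toReal :=
      (div_eq_one_iff_eq (hDtpos i).ne').mp hratio
    exact (ENNReal.toReal_eq_toReal_iff' (hEfin _ i) (hDne i)).mp htr
  -- decomposition of Tl ℓ ⁻¹' S ∩ S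
  have key2 : ∀ ℓ : Fin Q, volume (Tl ℓ ⁻¹' S ∩ S) = volume S := by
    intro ℓ
    have hset : Tl ℓ ⁻¹' S ∩ S = ⋃ i ∈ F, (Tl ℓ ⁻¹' S ∩ D i) := by
      calc Tl ℓ ⁻¹' S ∩ S = Tl ℓ ⁻¹' S ∩ ⋃ i ∈ F, D i := by rw [← hSF]
        _ = ⋃ i ∈ F, (Tl ℓ ⁻¹' S ∩ D i) := by rw [inter_iUnion₂]
    have hvolS : volume S = ∑ i ∈ F, volume (D i) := by
      rw [hSF]
      refine measure_biUnion_finset ?_ (fun i _ => hDmeas i)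
      intro i _ j _ hij
      exact hDdisj hij
    rw [hset, measure_biUnion_finset ?_ ?_, hvolS]
    · exact Finset.sum_congr rfl (fun i hi => hfull i hi ℓ)
    · intro i _ j _ hij
      exact (hDdisj hij).mono inter_subset_right inter_subset_right
    · intro i _
      exact (hSmeas.preimage (hTmeas ℓ)).inter (hDmeas i)
  constructor
  · intro ℓ
    rw [inter_comm]
    exact key2 ℓ
  · have : ∀ ℓ : Fin Q, volume (Tl ℓ ⁻¹' S ∩ S) = volume S := key2
    calc ∑ ℓ, ENNReal.ofReal (p ℓ) * volume (Tl ℓ ⁻¹' S ∩ S)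
        = ∑ ℓ, ENNReal.ofReal (p ℓ) * volume S := by
          exact Finset.sum_congr rfl (fun ℓ _ => by rw [key2 ℓ])
      _ = (∑ ℓ, ENNReal.ofReal (p ℓ)) * volume S := by rw [Finset.sum_mul]
      _ = ENNReal.ofReal (∑ ℓ, p ℓ) * volume S := by
          rw [ENNReal.ofReal_sum_of_nonneg (fun ℓ _ => (hp ℓ).le)]
      _ = volume S := by rw [hpsum, ENNReal.ofReal_one, one_mul]
end
end
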